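/- arXiv:2306.02364 — 8 statements merged into one kernel-verified Lean document; each statement's English description precedes it below -/
import Mathlib

section
/- Let T be a tournament whose vertex set is numbered v1,…,vn, and let G be the backedge graph of T under this numbering. Let ω(G) denote the clique number of G and χ(G) its (graph) chromatic number, and let χ(T) denote the (tournament) chromatic number of T. Then χ(T) ≤ χ(G) ≤ ω(G)·χ(T). -/
structure Tournament where
  V : Type
  fintype : Fintype V
  adj : V → V → Prop
  asymm : ∀ u v, adj u v → ¬ adj v u
  total : ∀ u v, u ≠ v → adj u v ∨ adj v u

attribute [instance] Tournament.fintype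

namespace Tournament

/-- A set of vertices is transitive if it includes no cyclic triangle. -/
def IsTransitiveSet (T : Tournament) (A : Set T.V) : Prop :=
  ∀ a ∈ A, ∀ b ∈ A, ∀ c ∈ A, T.adj a b → T.adj b c → ¬ T.adj c a

/-- The chromatic number of the subtournament induced on `A`. -/
noncomputable def chiOn (T : Tournament) (A : Set T.V) : ℕ :=
  sInf {k | ∃ C : Fin k → Set T.V, (∀ i, T.IsTransitiveSet (C i)) ∧ A ⊆ ⋃ i, C i}

noncomputable def chi (T : Tournament) : ℕ := T.chiOn Set.univ

def outN (T : Tournament) (v : T.V) : Set T.V := {u | T.adj v u}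
def inN (T : Tournament) (v : T.V) : Set T.V := {u | T.adj u v}

/-- The domination number of the subtournament induced on `A`. -/
noncomputable def domOn (T : Tournament) (A : Set T.V) : ℕ :=
  sInf {n | ∃ X : Finset T.V, ↑X ⊆ A ∧ (∀ v ∈ A, v ∉ X → ∃ x ∈ X, T.adj x v) ∧ X.card = n}

noncomputable def dom (T : Tournament) : ℕ := T.domOn Set.univ

/-- `A ⇒ B`: every edge between `A` and `B` is directed from `A` to `B`. -/
def CompleteTo (T : Tournament) (A B : Set T.V) : Prop :=
  ∀ a ∈ A, ∀ b ∈ B, T.adj a b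

def CompletePair (T : Tournament) (A B : Set T.V) : Prop :=
  Disjoint A B ∧ T.CompleteTo A B

/-- `G` has a subtournament inside `A` isomorphic to `H`. -/
def ContainsOn (G : Tournament) (A : Set G.V) (H : Tournament) : Prop :=
  ∃ f : H.V → G.V, Function.Injective f ∧ (∀ u, f u ∈ A) ∧
    ∀ u v, H.adj u v ↔ G.adj (f u) (f v)

def Contains (G H : Tournament) : Prop := G.ContainsOn Set.univ H

def IsHero (H : Tournament) : Prop :=
  ∃ c > 0, ∀ G : Tournament, ¬ G.Contains H → G.chi < c

def IsRebel (H : Tournament) : Prop :=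
  ∃ c > 0, ∀ G : Tournament, ¬ G.Contains H → G.dom < c

/-- The backedge graph of `T` under the numbering `σ`: for `i < j`,
`σ i` and `σ j` are adjacent iff the tournament edge goes from `σ j` to `σ i`. -/
def backedge (T : Tournament) {n : ℕ} (σ : Fin n ≃ T.V) : SimpleGraph T.V where
  Adj u v := (σ.symm u < σ.symm v ∧ T.adj v u) ∨ (σ.symm v < σ.symm u ∧ T.adj u v)
  symm := by
    constructor
    intro u v h
    rcases h with ⟨h1, h2⟩ | ⟨h1, h2⟩
    · exact Or.inr ⟨h1, h2⟩
    · exact Or.inl ⟨h1, h2⟩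
  loopless := by
    constructor
    intro v h
    rcases h with ⟨h1, _⟩ | ⟨h1, _⟩ <;> exact lt_irrefl _ h1

end Tournament

/-- The chromatic number of a graph. -/
noncomputable def gchi {V : Type} (G : SimpleGraph V) : ℕ :=
  sInf {k | ∃ f : V → Fin k, ∀ u v, G.Adj u v → f u ≠ f v}

/-- The clique number of a graph. -/
noncomputable def omegaG {V : Type} (G : SimpleGraph V) : ℕ :=
  sSup {k | ∃ s : Finset V, G.IsNClique k s}

/-!
A set independent in the backedge graph has all its edges pointing forward in the
numbering, so it contains no cyclic triangle; hence a proper colouring of the backedge graph is a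
colouring of `T`. Conversely, inside a transitive set the backedges form a strict partial order
(a backedge pair plus a forward edge would close a cyclic triangle), whose comparability graph is
properly coloured with `ω` colours by the length of the longest chain ending at each vertex
(Mirsky). Pairing this colour with the colour class of `T` properly colours the backedge graph.
-/

section ChainHeight

variable {V : Type*} [Fintype V] (r : V → V → Prop)

open Classical in
noncomputable def chainsEndingAt (v : V) : Finset (Finset V) :=
  Finset.univ.filter fun s => IsChain r (s : Set V) ∧ v ∈ s ∧ ∀ u ∈ s, u ≠ v → r u v

noncomputable def chainHeightAt (v : V) : ℕ := (chainsEndingAt r v).sup Finset.card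

variable {r}

lemma mem_chainsEndingAt {v : V} {s : Finset V} :
    s ∈ chainsEndingAt r v ↔
      IsChain r (s : Set V) ∧ v ∈ s ∧ ∀ u ∈ s, u ≠ v → r u v := by
  simp [chainsEndingAt]

lemma one_le_chainHeightAt (v : V) : 1 ≤ chainHeightAt r v := by
  have hv : {v} ∈ chainsEndingAt r v :=
    mem_chainsEndingAt.2 ⟨by simp [IsChain], Finset.mem_singleton_self v, by simp⟩
  exact Finset.le_sup (f := Finset.card) hv

lemma chainHeightAt_lt [IsTrans V r] (hirr : ∀ v, ¬ r v v) {u v : V}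
    (huv : r u v) : chainHeightAt r u < chainHeightAt r v := by
  classical
  refine (Finset.sup_lt_iff (one_le_chainHeightAt v)).2 fun s hs => ?_
  obtain ⟨hchain, -, hbelow⟩ := mem_chainsEndingAt.1 hs
  have hbelow_v : ∀ w ∈ s, r w v := fun w hw => by
    rcases eq_or_ne w u with rfl | hwu
    · exact huv
    · exact _root_.trans (hbelow w hw hwu) huv
  have hvs : v ∉ s := fun hv => hirr v (hbelow_v v hv)
  have hmem : insert v s ∈ chainsEndingAt r v := by
    refine mem_chainsEndingAt.2 ⟨?_, Finset.mem_insert_self v s, fun w hw hwv => ?_⟩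
    · rw [Finset.coe_insert]
      exact hchain.insert fun w hw _ => Or.inr (hbelow_v w hw)
    · exact hbelow_v w ((Finset.mem_insert.1 hw).resolve_left hwv)
  calc s.card < (insert v s).card := Finset.card_lt_card (Finset.ssubset_insert hvs)
    _ ≤ chainHeightAt r v := Finset.le_sup (f := Finset.card) hmem

lemma chainHeightAt_le_cliqueNum (G : SimpleGraph V) (hr : ∀ u v, r u v → G.Adj u v) (v : V) :
    chainHeightAt r v ≤ G.cliqueNum := by
  refine Finset.sup_le fun s hs => ?_
  have hclique : G.IsClique (s : Set V) :=
    (mem_chainsEndingAt.1 hs).1.imp fun {a b} h => h.elim (hr a b) fun h => (hr b a h).symm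
  exact SimpleGraph.IsClique.card_le_cliqueNum (tc := hclique)

end ChainHeight

theorem SimpleGraph.exists_fin_cliqueNum_strictMono {V : Type*} [Fintype V] (G : SimpleGraph V)
    {r : V → V → Prop} [IsTrans V r] (hr : ∀ u v, r u v → G.Adj u v) :
    ∃ g : V → Fin G.cliqueNum, ∀ u v, r u v → g u < g v := by
  refine ⟨fun v => ⟨chainHeightAt r v - 1, ?_⟩, fun u v huv => ?_⟩
  · have := one_le_chainHeightAt (r := r) v
    have := chainHeightAt_le_cliqueNum G hr v
    omega
  · have := one_le_chainHeightAt (r := r) u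
    have := chainHeightAt_lt (fun v h => G.irrefl (hr v v h)) huv
    exact Fin.mk_lt_mk.2 (by omega)

section GraphColouring

variable {V : Type} (G : SimpleGraph V)

lemma gchi_le_of_coloring {k : ℕ} (f : V → Fin k) (hf : ∀ u v, G.Adj u v → f u ≠ f v) :
    gchi G ≤ k :=
  Nat.sInf_le ⟨f, hf⟩

lemma exists_coloring_gchi [Finite V] :
    ∃ f : V → Fin (gchi G), ∀ u v, G.Adj u v → f u ≠ f v := by
  obtain ⟨k, ⟨e⟩⟩ := Finite.exists_equiv_fin V
  have hne : {k | ∃ f : V → Fin k, ∀ u v, G.Adj u v → f u ≠ f v}.Nonempty :=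
    ⟨k, e, fun u v h huv => h.ne (e.injective huv)⟩
  exact Nat.sInf_mem hne

lemma gchi_le_mul_of_coloring {k m : ℕ} (c : V → Fin m) (g : V → Fin k)
    (hg : ∀ u v, G.Adj u v → c u = c v → g u ≠ g v) : gchi G ≤ k * m :=
  gchi_le_of_coloring G (fun v => finProdFinEquiv (g v, c v)) fun u v huv h => by
    obtain ⟨hguv, hcuv⟩ := Prod.ext_iff.1 (finProdFinEquiv.injective h)
    exact hg u v huv hcuv hguv

end GraphColouring

namespace Tournament

variable (T : Tournament)

lemma IsTransitiveSet.mono {A B : Set T.V} (hB : T.IsTransitiveSet B) (hAB : A ⊆ B) :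
    T.IsTransitiveSet A :=
  fun a ha b hb c hc => hB a (hAB ha) b (hAB hb) c (hAB hc)

lemma isTransitiveSet_of_subsingleton {A : Set T.V} (hA : A.Subsingleton) :
    T.IsTransitiveSet A := by
  intro a ha b hb _ _ hab
  exact absurd (hA ha hb ▸ hab) (T.asymm a b hab)

lemma chi_le_of_coloring {k : ℕ} (c : T.V → Fin k)
    (hc : ∀ i, T.IsTransitiveSet {v | c v = i}) : T.chi ≤ k :=
  Nat.sInf_le ⟨fun i => {v | c v = i}, hc, fun v _ => Set.mem_iUnion.2 ⟨c v, rfl⟩⟩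

lemma exists_coloring_chi : ∃ c : T.V → Fin T.chi, ∀ i, T.IsTransitiveSet {v | c v = i} := by
  let e := Fintype.equivFin T.V
  have hne : {k | ∃ C : Fin k → Set T.V, (∀ i, T.IsTransitiveSet (C i)) ∧
      Set.univ ⊆ ⋃ i, C i}.Nonempty :=
    ⟨_, fun i => {v | e v = i},
      fun i => T.isTransitiveSet_of_subsingleton fun a ha b hb => e.injective (ha.trans hb.symm),
      fun v _ => Set.mem_iUnion.2 ⟨e v, rfl⟩⟩
  obtain ⟨C, hC, hcover⟩ := Nat.sInf_mem hne
  choose c hc using fun v => Set.mem_iUnion.1 (hcover (Set.mem_univ v))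
  exact ⟨c, fun i => (hC i).mono T fun v hv => hv ▸ hc v⟩

variable {n : ℕ} (σ : Fin n ≃ T.V)

lemma lt_of_adj_of_not_backedge_adj {a b : T.V} (hab : T.adj a b)
    (hnadj : ¬ (T.backedge σ).Adj a b) : σ.symm a < σ.symm b := by
  have hne : σ.symm a ≠ σ.symm b := fun h => T.asymm a b hab (σ.symm.injective h ▸ hab)
  exact hne.lt_or_gt.resolve_right fun h => hnadj (Or.inr ⟨h, hab⟩)

lemma isTransitiveSet_of_backedge_independent {A : Set T.V}
    (hA : ∀ a ∈ A, ∀ b ∈ A, ¬ (T.backedge σ).Adj a b) : T.IsTransitiveSet A := by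
  intro a ha b hb c hc hab hbc hca
  have hlt₁ := T.lt_of_adj_of_not_backedge_adj σ hab (hA a ha b hb)
  have hlt₂ := T.lt_of_adj_of_not_backedge_adj σ hbc (hA b hb c hc)
  have hlt₃ := T.lt_of_adj_of_not_backedge_adj σ hca (hA c hc a ha)
  exact lt_irrefl _ (hlt₁.trans (hlt₂.trans hlt₃))

lemma backedge_trans_of_isTransitiveSet {A : Set T.V} (hA : T.IsTransitiveSet A)
    {a b c : T.V} (ha : a ∈ A) (hb : b ∈ A) (hc : c ∈ A)
    (hab : σ.symm a < σ.symm b ∧ T.adj b a) (hbc : σ.symm b < σ.symm c ∧ T.adj c b) :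
    σ.symm a < σ.symm c ∧ T.adj c a := by
  have hlt := hab.1.trans hbc.1
  have hne : a ≠ c := fun h => hlt.ne (congrArg σ.symm h)
  refine ⟨hlt, (T.total c a hne.symm).resolve_right fun hac => ?_⟩
  exact hA a ha c hc b hb hac hbc.2 hab.2

end Tournament

/-- If `G` is the backedge graph of a tournament `T` under a numbering, then
`χ(T) ≤ χ(G) ≤ ω(G)·χ(T)`. -/
theorem backedge_chi_bounds (T : Tournament) {n : ℕ} (σ : Fin n ≃ T.V) :
    T.chi ≤ gchi (T.backedge σ) ∧
      gchi (T.backedge σ) ≤ omegaG (T.backedge σ) * T.chi := by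
  refine ⟨?_, ?_⟩
  · obtain ⟨f, hf⟩ := exists_coloring_gchi (T.backedge σ)
    exact T.chi_le_of_coloring f fun i => T.isTransitiveSet_of_backedge_independent σ
      fun a ha b hb hab => hf a b hab (ha.trans hb.symm)
  · obtain ⟨c, hc⟩ := T.exists_coloring_chi
    let r : T.V → T.V → Prop := fun u v => c u = c v ∧ σ.symm u < σ.symm v ∧ T.adj v u
    have : IsTrans T.V r := ⟨fun a b d hab hbd =>
      ⟨hab.1.trans hbd.1, T.backedge_trans_of_isTransitiveSet σ (hc (c a)) rfl hab.1.symm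
        (hab.1.trans hbd.1).symm hab.2 hbd.2⟩⟩
    -- `omegaG` is `SimpleGraph.cliqueNum` by definition
    obtain ⟨g, hg⟩ := (T.backedge σ).exists_fin_cliqueNum_strictMono (r := r)
      fun u v huv => Or.inl huv.2
    exact gchi_le_mul_of_coloring _ c g fun u v huv hcuv =>
      huv.elim (fun h => (hg u v ⟨hcuv, h⟩).ne) fun h => (hg v u ⟨hcuv.symm, h⟩).ne'
end

section
/- Suppose that for every integer c ≥ 0 there exists d ≥ 0 such that every tournament G with χ(G) ≥ d has a complete pair (A,B) with χ(A), χ(B) ≥ c. Then for all integers t, c ≥ 1 there exists d ≥ 1 such that every finite simple undirected graph G with chromatic number at least d and with no clique of t vertices has two subsets A, B ⊆ V(G) such that there are no edges between A and B and the induced subgraphs G[A] and G[B] both have chromatic number at least c. -/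
/-- The chromatic number of the subgraph of `G` induced on `A`. -/
noncomputable def gchiOn {V : Type} (G : SimpleGraph V) (A : Set V) : ℕ :=
  sInf {k | ∃ f : V → Fin k, ∀ u ∈ A, ∀ v ∈ A, G.Adj u v → f u ≠ f v}

/-!
Rank the vertices of `G` injectively by `r` and orient every edge of `G` forward and every
non-edge backward. A stable set of `G` becomes transitive, and a transitive set induces a graph
whose edges compose forward, so by Mirsky's argument it is `(t - 1)`-colourable when `G` has no
`K_t`: the tournament has chromatic number at least about `χ(G) / (t - 1)`. Cut a complete pair
`A ⇒ B` of it at the least rank `k` at which `B ∩ {r < k}` reaches chromatic number `c`. Arcs from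
`A ∩ {r ≥ k}` back to `B ∩ {r < k}` are non-edges, so if `A ∩ {r ≥ k}` has chromatic number `c`
we are done. Otherwise `A ∩ {r < k}` keeps most of the chromatic number of `A` and lies before some
`β ∈ B`, so it lies in the neighbourhood of `β`, which has no `K_{t-1}`: induction on `t`.
-/

open Function

namespace Tournament

variable (T : Tournament)

lemma isTransitiveSet_singleton (x : T.V) : T.IsTransitiveSet {x} := by
  intro a ha b hb _ _ hab _ _
  rw [Set.mem_singleton_iff] at ha hb
  subst ha hb
  exact T.asymm _ _ hab hab

lemma chiOn_le_of_cover {S : Set T.V} {k : ℕ} (C : Fin k → Set T.V)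
    (hC : ∀ i, T.IsTransitiveSet (C i)) (hS : S ⊆ ⋃ i, C i) : T.chiOn S ≤ k :=
  Nat.sInf_le ⟨C, hC, hS⟩

lemma exists_cover (S : Set T.V) :
    ∃ C : Fin (T.chiOn S) → Set T.V, (∀ i, T.IsTransitiveSet (C i)) ∧ S ⊆ ⋃ i, C i := by
  have hsingletons : Fintype.card T.V ∈
      {k | ∃ C : Fin k → Set T.V, (∀ i, T.IsTransitiveSet (C i)) ∧ S ⊆ ⋃ i, C i} :=
    ⟨fun i => {(Fintype.equivFin T.V).symm i}, fun i => T.isTransitiveSet_singleton _,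
      fun v _ => Set.mem_iUnion.mpr ⟨Fintype.equivFin T.V v, by simp⟩⟩
  exact Nat.sInf_mem ⟨_, hsingletons⟩

lemma chiOn_mono {S S' : Set T.V} (h : S ⊆ S') : T.chiOn S ≤ T.chiOn S' :=
  let ⟨C, hC, hS'⟩ := T.exists_cover S'
  T.chiOn_le_of_cover C hC (h.trans hS')

lemma chiOn_union_le (S S' : Set T.V) : T.chiOn (S ∪ S') ≤ T.chiOn S + T.chiOn S' := by
  obtain ⟨C, hC, hS⟩ := T.exists_cover S
  obtain ⟨C', hC', hS'⟩ := T.exists_cover S'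
  refine T.chiOn_le_of_cover (Fin.append C C') (Fin.addCases (by simpa using hC)
    (by simpa using hC')) (Set.union_subset (hS.trans ?_) (hS'.trans ?_)) <;>
  refine Set.iUnion_subset fun i => ?_
  · simpa using Set.subset_iUnion (Fin.append C C') (Fin.castAdd _ i)
  · simpa using Set.subset_iUnion (Fin.append C C') (Fin.natAdd _ i)

lemma nonempty_of_chiOn_pos {S : Set T.V} (h : 0 < T.chiOn S) : S.Nonempty := by
  rw [Set.nonempty_iff_ne_empty]
  rintro rfl
  have := T.chiOn_le_of_cover Fin.elim0 (fun i => i.elim0) (Set.empty_subset _)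
  omega

lemma chiOn_le_sep_lt_add_sep_ge (f : T.V → ℕ) (k : ℕ) (A : Set T.V) :
    T.chiOn A ≤ T.chiOn {a ∈ A | f a < k} + T.chiOn {a ∈ A | k ≤ f a} :=
  (T.chiOn_mono fun a ha => (lt_or_ge (f a) k).imp (⟨ha, ·⟩) (⟨ha, ·⟩)).trans
    (T.chiOn_union_le _ _)

/-- Take the least `k` with `c ≤ χ(B ∩ {f < k})`: then `χ(B ∩ {f < k - 1}) < c ≤ χ(B)`. -/
lemma exists_threshold (f : T.V → ℕ) {B : Set T.V} {c : ℕ} (hc : 0 < c) (hB : c ≤ T.chiOn B) :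
    ∃ k, c ≤ T.chiOn {b ∈ B | f b < k} ∧ ∃ β ∈ B, k ≤ f β + 1 := by
  classical
  have hex : ∃ k, c ≤ T.chiOn {b ∈ B | f b < k} :=
    ⟨Finset.univ.sup f + 1, hB.trans <| T.chiOn_mono fun b hb =>
      ⟨hb, Nat.lt_succ_of_le (Finset.le_sup (Finset.mem_univ b))⟩⟩
  refine ⟨Nat.find hex, Nat.find_spec hex, ?_⟩
  have hpos : 0 < Nat.find hex :=
    let ⟨_, _, hb⟩ := T.nonempty_of_chiOn_pos (hc.trans_le (Nat.find_spec hex))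
    (Nat.zero_le _).trans_lt hb
  by_contra! h
  exact Nat.find_min hex (Nat.sub_one_lt hpos.ne')
    (hB.trans (T.chiOn_mono fun b hb => ⟨hb, by have := h b hb; omega⟩))

end Tournament

namespace SimpleGraph

section Colouring

variable {V : Type} (G : SimpleGraph V)

lemma gchiOn_le_card {S : Set V} {κ : Type} [Fintype κ] (f : V → κ)
    (hf : ∀ u ∈ S, ∀ v ∈ S, G.Adj u v → f u ≠ f v) : gchiOn G S ≤ Fintype.card κ :=
  Nat.sInf_le ⟨fun v => Fintype.equivFin κ (f v),
    fun u hu v hv huv h => hf u hu v hv huv ((Fintype.equivFin κ).injective h)⟩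

lemma exists_coloring_gchiOn [Fintype V] (S : Set V) :
    ∃ f : V → Fin (gchiOn G S), ∀ u ∈ S, ∀ v ∈ S, G.Adj u v → f u ≠ f v := by
  have hcard : Fintype.card V ∈
      {k | ∃ f : V → Fin k, ∀ u ∈ S, ∀ v ∈ S, G.Adj u v → f u ≠ f v} :=
    ⟨Fintype.equivFin V, fun _ _ _ _ huv h => huv.ne ((Fintype.equivFin V).injective h)⟩
  exact Nat.sInf_mem ⟨_, hcard⟩

def IsNatColoringOn (S : Set V) (n : ℕ) (g : V → ℕ) : Prop :=
  (∀ v ∈ S, g v < n) ∧ ∀ u ∈ S, ∀ v ∈ S, G.Adj u v → g u ≠ g v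

variable {G}

lemma IsNatColoringOn.mono {S S' : Set V} {n : ℕ} {g : V → ℕ} (h : G.IsNatColoringOn S' n g)
    (hS : S ⊆ S') : G.IsNatColoringOn S n g :=
  ⟨fun v hv => h.1 v (hS hv), fun u hu v hv => h.2 u (hS hu) v (hS hv)⟩

/-- The extra colour absorbs the vertices outside `S`, which a coloring `V → Fin k` must colour
too. -/
lemma IsNatColoringOn.gchiOn_le {S : Set V} {n : ℕ} {g : V → ℕ} (h : G.IsNatColoringOn S n g) :
    gchiOn G S ≤ n + 1 := by
  simpa using G.gchiOn_le_card (fun v => (⟨min (g v) n, by omega⟩ : Fin (n + 1)))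
    fun u hu v hv huv hf => h.2 u hu v hv huv <| by
      simpa [min_eq_left (h.1 u hu).le, min_eq_left (h.1 v hv).le] using hf

lemma exists_isNatColoringOn_iUnion {k n : ℕ} {P : Fin k → Set V}
    (hP : ∀ i, ∃ g, G.IsNatColoringOn (P i) n g) :
    ∃ g, G.IsNatColoringOn (⋃ i, P i) (k * n) g := by
  classical
  choose g hg using hP
  have hidx : ∀ {v}, v ∈ ⋃ i, P i → ∃ i, v ∈ P i := Set.mem_iUnion.mp
  refine ⟨fun v => if h : ∃ i, v ∈ P i then h.choose * n + g h.choose v else 0, ?_, ?_⟩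
  · intro v hv
    have hi := (hidx hv).choose_spec
    have := (hg _).1 v hi
    simp only [dif_pos (hidx hv)]
    nlinarith [(hidx hv).choose.isLt]
  · intro u hu v hv huv heq
    simp only [dif_pos (hidx hu), dif_pos (hidx hv)] at heq
    set i := (hidx hu).choose
    set j := (hidx hv).choose
    have hiu : u ∈ P i := (hidx hu).choose_spec
    have hjv : v ∈ P j := (hidx hv).choose_spec
    clear_value i j
    have := (hg i).1 u hiu
    have := (hg j).1 v hjv
    obtain rfl : i = j := Fin.ext (by nlinarith)
    exact (hg i).2 u hiu v hjv huv (Nat.add_left_cancel heq)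

lemma not_exists_isNClique_of_forall_adj {n : ℕ} {A W : Set V} (hAW : A ⊆ W) {β : V} (hβ : β ∈ W)
    (hβA : ∀ a ∈ A, G.Adj β a) (hK : ¬ ∃ s : Finset V, G.IsNClique (n + 1) s ∧ ↑s ⊆ W) :
    ¬ ∃ s : Finset V, G.IsNClique n s ∧ ↑s ⊆ A := by
  classical
  rintro ⟨s, hs, hsA⟩
  exact hK ⟨insert β s, hs.insert fun b hb => hβA b (hsA hb),
    by simpa using Set.insert_subset hβ (hsA.trans hAW)⟩

end Colouring

section CliqueHeight

variable {V : Type} [Fintype V] (G : SimpleGraph V) (r : V → ℕ) (S : Set V)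

open Classical in
noncomputable def cliquesEndingAt (v : V) : Finset (Finset V) :=
  Finset.univ.filter fun s =>
    ↑s ⊆ S ∧ v ∈ s ∧ (∀ u ∈ s, u ≠ v → r u < r v) ∧ G.IsClique (s : Set V)

noncomputable def cliqueHeight (v : V) : ℕ := (G.cliquesEndingAt r S v).sup Finset.card

variable {G r S}

lemma mem_cliquesEndingAt {v : V} {s : Finset V} :
    s ∈ G.cliquesEndingAt r S v ↔
      ↑s ⊆ S ∧ v ∈ s ∧ (∀ u ∈ s, u ≠ v → r u < r v) ∧ G.IsClique (s : Set V) := by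
  simp [cliquesEndingAt]

lemma singleton_mem_cliquesEndingAt {v : V} (hv : v ∈ S) : {v} ∈ G.cliquesEndingAt r S v :=
  mem_cliquesEndingAt.mpr ⟨by simpa, by simp, by simp, by simp⟩

lemma one_le_cliqueHeight {v : V} (hv : v ∈ S) : 1 ≤ G.cliqueHeight r S v :=
  Finset.le_sup (f := Finset.card) (singleton_mem_cliquesEndingAt hv)

lemma cliqueHeight_le {n : ℕ} (hK : ¬ ∃ s : Finset V, G.IsNClique (n + 1) s ∧ ↑s ⊆ S) (v : V) :
    G.cliqueHeight r S v ≤ n := Finset.sup_le fun s hs => by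
  obtain ⟨hsS, -, -, hs⟩ := mem_cliquesEndingAt.mp hs
  by_contra! hlt
  obtain ⟨t, hts, ht⟩ := Finset.exists_subset_card_eq (Nat.succ_le_of_lt hlt)
  exact hK ⟨t, ⟨hs.subset (by simpa using hts), ht⟩, (Finset.coe_subset.mpr hts).trans hsS⟩

/-- A largest clique ending at `a` extends by `b`: `htrans` makes `b` adjacent to all of it. -/
lemma cliqueHeight_lt_cliqueHeight
    (htrans : ∀ a ∈ S, ∀ b ∈ S, ∀ c ∈ S, r a < r b → r b < r c → G.Adj a b → G.Adj b c →
      G.Adj a c)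
    {a b : V} (ha : a ∈ S) (hb : b ∈ S) (hab : r a < r b) (hadj : G.Adj a b) :
    G.cliqueHeight r S a < G.cliqueHeight r S b := by
  classical
  obtain ⟨s, hs, hsa⟩ :=
    Finset.exists_mem_eq_sup _ ⟨_, singleton_mem_cliquesEndingAt ha⟩ Finset.card
  obtain ⟨hsS, has, hsr, hs⟩ := mem_cliquesEndingAt.mp hs
  have hbs : b ∉ s := fun hbs => (hsr b hbs hadj.ne').not_gt hab
  have hins : insert b s ∈ G.cliquesEndingAt r S b := by
    refine mem_cliquesEndingAt.mpr ⟨?_, Finset.mem_insert_self _ _, ?_, ?_⟩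
    · simpa using Set.insert_subset hb hsS
    · intro u hu hub
      rcases Finset.mem_insert.mp hu with rfl | hu
      · exact absurd rfl hub
      rcases eq_or_ne u a with rfl | hua
      · exact hab
      · exact (hsr u hu hua).trans hab
    · rw [Finset.coe_insert]
      refine hs.insert fun x hx hxb => ?_
      rcases eq_or_ne x a with rfl | hxa
      · exact hadj.symm
      · exact (htrans x (hsS hx) a ha b hb (hsr x hx hxa) hab (hs hx has hxa) hadj).symm
  have := Finset.le_sup (f := Finset.card) hins
  rw [Finset.card_insert_of_notMem hbs] at this
  unfold cliqueHeight
  omega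

/-- Mirsky's argument. -/
lemma exists_isNatColoringOn_of_forward_transitive (hr : Injective r)
    (htrans : ∀ a ∈ S, ∀ b ∈ S, ∀ c ∈ S, r a < r b → r b < r c → G.Adj a b → G.Adj b c →
      G.Adj a c)
    {n : ℕ} (hK : ¬ ∃ s : Finset V, G.IsNClique (n + 1) s ∧ ↑s ⊆ S) :
    ∃ g, G.IsNatColoringOn S n g := by
  refine ⟨fun v => G.cliqueHeight r S v - 1, fun v hv => ?_, fun u hu v hv huv => ?_⟩
  · have := one_le_cliqueHeight (G := G) (r := r) hv
    have := cliqueHeight_le (G := G) (r := r) hK v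
    show G.cliqueHeight r S v - 1 < n
    omega
  have := one_le_cliqueHeight (G := G) (r := r) hu
  have := one_le_cliqueHeight (G := G) (r := r) hv
  show G.cliqueHeight r S u - 1 ≠ G.cliqueHeight r S v - 1
  rcases (hr.ne huv.ne).lt_or_gt with h | h
  · have := cliqueHeight_lt_cliqueHeight htrans hu hv h huv
    omega
  · have := cliqueHeight_lt_cliqueHeight htrans hv hu h huv.symm
    omega

end CliqueHeight

section OrderTournament

variable {V : Type} [Fintype V] (G : SimpleGraph V) {r : V → ℕ} (hr : Injective r) (W : Set V)

noncomputable def orderTournament : Tournament where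
  V := W
  fintype := Fintype.ofFinite W
  adj u v := r u < r v ∧ G.Adj u v ∨ r v < r u ∧ ¬ G.Adj u v
  asymm u v := by grind [SimpleGraph.adj_symm]
  total u v huv := by
    have : r u ≠ r v := hr.ne (Subtype.val_injective.ne huv)
    by_cases G.Adj u v <;> by_cases r u < r v <;> grind [SimpleGraph.adj_symm]

/-- Its arcs inside an independent set all point backward, so they cannot form a cycle. -/
lemma chiOn_orderTournament_le (S : Set W) :
    (G.orderTournament hr W).chiOn S ≤ gchiOn G (Subtype.val '' S) := by
  obtain ⟨f, hf⟩ := G.exists_coloring_gchiOn (Subtype.val '' S)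
  refine Tournament.chiOn_le_of_cover _ (fun i => ({u : W | u ∈ S ∧ f u = i} : Set W))
    (fun i => ?_) fun (u : W) hu => Set.mem_iUnion.mpr ⟨f u, hu, rfl⟩
  rintro a ⟨ha, rfl⟩ b ⟨hb, hab⟩ c ⟨hc, hac⟩ h₁ h₂ h₃
  have hind {x y : W} (hx : x ∈ S) (hy : y ∈ S) (hxy : f x = f y) : ¬ G.Adj x y :=
    fun hadj => hf x ⟨x, hx, rfl⟩ y ⟨y, hy, rfl⟩ hadj hxy
  rcases h₁ with ⟨-, h₁⟩ | ⟨h₁, -⟩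
  · exact hind ha hb hab.symm h₁
  rcases h₂ with ⟨-, h₂⟩ | ⟨h₂, -⟩
  · exact hind hb hc (hab.trans hac.symm) h₂
  rcases h₃ with ⟨-, h₃⟩ | ⟨h₃, -⟩
  · exact hind hc ha hac h₃
  omega

/-- Inside a transitive set the edges of `G` are closed under `r`-forward composition, so each of
the `chi` colour classes gets `n` colours from Mirsky's argument. -/
lemma gchiOn_le_chi_orderTournament_mul {n : ℕ}
    (hK : ¬ ∃ s : Finset V, G.IsNClique (n + 1) s ∧ ↑s ⊆ W) :
    gchiOn G W ≤ (G.orderTournament hr W).chi * n + 1 := by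
  obtain ⟨C, hC, hcover⟩ := (G.orderTournament hr W).exists_cover Set.univ
  have hcolour (i) : ∃ g, G.IsNatColoringOn (Subtype.val '' C i) n g := by
    refine exists_isNatColoringOn_of_forward_transitive hr ?_ fun ⟨s, hs, hsC⟩ =>
      hK ⟨s, hs, hsC.trans (Subtype.coe_image_subset W _)⟩
    rintro _ ⟨a, ha, rfl⟩ _ ⟨b, hb, rfl⟩ _ ⟨c, hc, rfl⟩ hab hbc hadj₁ hadj₂
    by_contra hac
    exact hC i a ha b hb c hc (.inl ⟨hab, hadj₁⟩) (.inl ⟨hbc, hadj₂⟩)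
      (.inr ⟨hab.trans hbc, fun h => hac h.symm⟩)
  obtain ⟨g, hg⟩ := exists_isNatColoringOn_iUnion hcolour
  refine (hg.mono fun v hv => ?_).gchiOn_le
  obtain ⟨i, hi⟩ := Set.mem_iUnion.mp (hcover (Set.mem_univ ⟨v, hv⟩))
  exact Set.mem_iUnion.mpr ⟨i, ⟨v, hv⟩, hi, rfl⟩

variable {G hr W} in
lemma exists_anticomplete_or_exists_forall_adj {A B : Set W}
    (hAB : (G.orderTournament hr W).CompletePair A B) {c d : ℕ} (hc : 0 < c)
    (hA : c + d ≤ (G.orderTournament hr W).chiOn A) (hB : c ≤ (G.orderTournament hr W).chiOn B) :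
    (∃ A' B' : Set V, Disjoint A' B' ∧ (∀ a ∈ A', ∀ b ∈ B', ¬ G.Adj a b) ∧
      c ≤ gchiOn G A' ∧ c ≤ gchiOn G B') ∨
    ∃ A' ⊆ W, ∃ β ∈ W, (∀ a ∈ A', G.Adj β a) ∧ d ≤ gchiOn G A' := by
  set T := G.orderTournament hr W
  change c + d ≤ T.chiOn A at hA
  change c ≤ T.chiOn B at hB
  obtain ⟨hdisj, hcomplete⟩ := hAB
  obtain ⟨k, hk, ⟨β, hβW⟩, hβB, hβ⟩ := T.exists_threshold (fun u : W => r u) hc hB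
  by_cases hA₁ : c ≤ T.chiOn ({a ∈ A | k ≤ r a} : Set W)
  · refine .inl ⟨_, _, (Set.disjoint_image_iff Subtype.val_injective).mpr
      (hdisj.mono (fun _ h => h.1) fun _ h => h.1), ?_,
      hA₁.trans (G.chiOn_orderTournament_le hr W _), hk.trans (G.chiOn_orderTournament_le hr W _)⟩
    rintro _ ⟨a, ⟨ha, hka⟩, rfl⟩ _ ⟨b, ⟨hb, hbk⟩, rfl⟩
    rcases hcomplete a ha b hb with ⟨h, -⟩ | ⟨-, h⟩
    · omega
    · exact h
  refine .inr ⟨_, Subtype.coe_image_subset W {a ∈ A | r a < k}, β, hβW, ?_, ?_⟩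
  · rintro _ ⟨a, ⟨ha, hak⟩, rfl⟩
    have hne : r a ≠ r β := hr.ne (Subtype.val_injective.ne fun h => hdisj.ne_of_mem ha hβB h)
    rcases hcomplete a ha ⟨β, hβW⟩ hβB with ⟨-, h⟩ | ⟨h, -⟩
    · exact h.symm
    · omega
  · have : T.chiOn A ≤
        T.chiOn ({a ∈ A | r a < k} : Set W) + T.chiOn ({a ∈ A | k ≤ r a} : Set W) :=
      T.chiOn_le_sep_lt_add_sep_ge (fun u : W => r u) k A
    exact (by omega : d ≤ T.chiOn ({a ∈ A | r a < k} : Set W)).trans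
      (G.chiOn_orderTournament_le hr W _)

end OrderTournament

end SimpleGraph

theorem exists_anticomplete_pair_of_not_exists_isNClique
    (hyp : ∀ c : ℕ, ∃ d : ℕ, ∀ G : Tournament, d ≤ G.chi →
      ∃ A B : Set G.V, G.CompletePair A B ∧ c ≤ G.chiOn A ∧ c ≤ G.chiOn B)
    (t : ℕ) {c : ℕ} (hc : 0 < c) :
    ∃ d : ℕ, ∀ (V : Type) [Fintype V] (G : SimpleGraph V) (W : Set V),
      d ≤ gchiOn G W → (¬ ∃ s : Finset V, G.IsNClique t s ∧ ↑s ⊆ W) →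
      ∃ A B : Set V, Disjoint A B ∧ (∀ a ∈ A, ∀ b ∈ B, ¬ G.Adj a b) ∧
        c ≤ gchiOn G A ∧ c ≤ gchiOn G B := by
  induction t with
  | zero => exact ⟨0, fun V _ G W _ hK => (hK ⟨∅, by simp, by simp⟩).elim⟩
  | succ t ih =>
    obtain ⟨d, hd⟩ := ih
    obtain ⟨D, hD⟩ := hyp (c + d)
    refine ⟨D * t + 2, fun V _ G W hχ hK => ?_⟩
    have hr : Injective fun v => (Fintype.equivFin V v : ℕ) :=
      Fin.val_injective.comp (Fintype.equivFin V).injective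
    have hT : D ≤ (G.orderTournament hr W).chi := by
      have := G.gchiOn_le_chi_orderTournament_mul hr W hK
      by_contra! h
      nlinarith
    obtain ⟨A, B, hAB, hA, hB⟩ := hD _ hT
    obtain h | ⟨A', hA'W, β, hβ, hβA', hdA'⟩ :=
      SimpleGraph.exists_anticomplete_or_exists_forall_adj hAB hc hA (le_trans (by omega) hB)
    · exact h
    · exact hd V G A' hdA' (SimpleGraph.not_exists_isNClique_of_forall_adj hA'W hβ hβA' hK)

/-- If the tournament conjecture holds, then the El-Zahar–Erdős statement holds. -/
theorem tournament_conj_implies_elzahar_erdos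
    (hyp : ∀ c : ℕ, ∃ d : ℕ, ∀ G : Tournament, d ≤ G.chi →
      ∃ A B : Set G.V, G.CompletePair A B ∧ c ≤ G.chiOn A ∧ c ≤ G.chiOn B) :
    ∀ t c : ℕ, 1 ≤ t → 1 ≤ c → ∃ d : ℕ, 1 ≤ d ∧
      ∀ (V : Type) [Fintype V] (G : SimpleGraph V),
        d ≤ gchiOn G Set.univ →
        (¬ ∃ s : Finset V, G.IsNClique t s) →
        ∃ A B : Set V, Disjoint A B ∧ (∀ a ∈ A, ∀ b ∈ B, ¬ G.Adj a b) ∧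
          c ≤ gchiOn G A ∧ c ≤ gchiOn G B := by
  intro t c _ hc
  obtain ⟨d, hd⟩ := exists_anticomplete_pair_of_not_exists_isNClique hyp t hc
  refine ⟨d + 1, by omega, fun V _ G hχ hK => hd V G Set.univ (by omega) ?_⟩
  rintro ⟨s, hs, -⟩
  exact hK ⟨s, hs⟩
end

section
/- For every tournament H there exists a tournament G with dom(G) ≥ dom(H) such that for every vertex v of G, the subtournament induced on N⁺(v) has domination number exactly one. -/
namespace Tournament

lemma not_adj_self (T : Tournament) (u : T.V) : ¬ T.adj u u :=
  fun h => T.asymm u u h h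

end Tournament

/-- Cyclic triple of a tournament: three layers, edges within layer follow H,
edges between consecutive layers follow H with ties going "forward". -/
def Tournament.triple (H : Tournament) : Tournament where
  V := H.V × ZMod 3
  fintype := inferInstance
  adj p q := (p.2 = q.2 ∧ H.adj p.1 q.1) ∨
             (q.2 = p.2 + 1 ∧ (p.1 = q.1 ∨ H.adj p.1 q.1)) ∨
             (p.2 = q.2 + 1 ∧ H.adj p.1 q.1)
  asymm := by
    have zf1 : ∀ i j : ZMod 3, i = j → j = i + 1 → False := by decide
    have zf2 : ∀ i j : ZMod 3, i = j + 1 → j = i + 1 → False := by decide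
    rintro ⟨u, i⟩ ⟨v, j⟩ h h'
    rcases h with ⟨e, a⟩ | ⟨e, a⟩ | ⟨e, a⟩ <;>
      rcases h' with ⟨e', a'⟩ | ⟨e', a'⟩ | ⟨e', a'⟩ <;> dsimp at *
    · exact H.asymm _ _ a a'
    · exact zf1 j i e.symm e'
    · exact zf1 i j e e'
    · exact zf1 i j e'.symm e
    · exact zf2 i j e' e
    · rcases a with rfl | a
      · exact H.not_adj_self _ a'
      · exact H.asymm _ _ a a'
    · exact zf1 j i e' e
    · rcases a' with rfl | a'
      · exact H.not_adj_self _ a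
      · exact H.asymm _ _ a a'
    · exact zf2 i j e e'
  total := by
    have znext : ∀ i j : ZMod 3, i ≠ j → j = i + 1 ∨ i = j + 1 := by decide
    rintro ⟨u, i⟩ ⟨v, j⟩ hne
    by_cases hij : i = j
    · subst hij
      have huv : u ≠ v := fun h => hne (by rw [h])
      rcases H.total u v huv with a | a
      · exact Or.inl (Or.inl ⟨rfl, a⟩)
      · exact Or.inr (Or.inl ⟨rfl, a⟩)
    · rcases znext i j hij with e | e
      · by_cases h : u = v ∨ H.adj u v
        · exact Or.inl (Or.inr (Or.inl ⟨e, h⟩))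
        · push_neg at h
          rcases H.total u v h.1 with a | a
          · exact absurd a h.2
          · exact Or.inr (Or.inr (Or.inr ⟨e, a⟩))
      · by_cases h : v = u ∨ H.adj v u
        · exact Or.inr (Or.inr (Or.inl ⟨e, h⟩))
        · push_neg at h
          rcases H.total v u h.1 with a | a
          · exact absurd a h.2
          · exact Or.inl (Or.inr (Or.inr ⟨e, a⟩))

lemma Tournament.triple_adj_imp (H : Tournament) {u v : H.V} {i j : ZMod 3}
    (h : H.triple.adj (u, i) (v, j)) : u = v ∨ H.adj u v := by
  rcases h with ⟨_, a⟩ | ⟨_, a⟩ | ⟨_, a⟩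
  · exact Or.inr a
  · exact a
  · exact Or.inr a

lemma Tournament.triple_dominator (H : Tournament) (v : H.V) (i : ZMod 3) :
    H.triple.adj (v, i) (v, i + 1) ∧
    ∀ q ∈ H.triple.outN (v, i), q ≠ (v, i + 1) → H.triple.adj (v, i + 1) q := by
  constructor
  · exact Or.inr (Or.inl ⟨rfl, Or.inl rfl⟩)
  · rintro ⟨u, j⟩ hq hne
    rcases hq with ⟨e, a⟩ | ⟨e, a⟩ | ⟨e, a⟩ <;> dsimp at e a
    · exact Or.inr (Or.inr ⟨by rw [e], a⟩)
    · rcases a with rfl | a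
      · exact absurd (by rw [e]) hne
      · exact Or.inl ⟨e.symm, a⟩
    · have hz : ∀ i j : ZMod 3, i = j + 1 → j = i + 1 + 1 := by decide
      exact Or.inr (Or.inl ⟨hz i j e, Or.inr a⟩)

lemma Tournament.domOn_eq_one_of_dominator (T : Tournament) (A : Set T.V) (d : T.V)
    (hd : d ∈ A) (hdom : ∀ q ∈ A, q ≠ d → T.adj d q) : T.domOn A = 1 := by
  have h1 : (1 : ℕ) ∈ {n | ∃ X : Finset T.V, ↑X ⊆ A ∧
      (∀ v ∈ A, v ∉ X → ∃ x ∈ X, T.adj x v) ∧ X.card = n} := by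
    refine ⟨{d}, by simpa using hd, ?_, Finset.card_singleton d⟩
    intro w hw hwX
    exact ⟨d, Finset.mem_singleton_self d, hdom w hw (by simpa using hwX)⟩
  have hmem := Nat.sInf_mem ⟨1, h1⟩
  rw [Tournament.domOn]
  refine le_antisymm (Nat.sInf_le h1) ?_
  by_contra hlt
  push_neg at hlt
  interval_cases h : sInf {n | ∃ X : Finset T.V, ↑X ⊆ A ∧
      (∀ v ∈ A, v ∉ X → ∃ x ∈ X, T.adj x v) ∧ X.card = n}
  obtain ⟨X, _, hX, hcard⟩ := hmem
  rw [Finset.card_eq_zero] at hcard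
  subst hcard
  obtain ⟨x, hx, -⟩ := hX d hd (by simp)
  exact absurd hx (by simp)

/-- For every tournament `H` there is a tournament `G` with `dom(G) ≥ dom(H)`
in which every out-neighbourhood induces a subtournament of domination number one. -/
theorem dom_out_nbrs_one (H : Tournament) :
    ∃ G : Tournament, H.dom ≤ G.dom ∧ ∀ v : G.V, G.domOn (G.outN v) = 1 := by
  classical
  refine ⟨H.triple, ?_, ?_⟩
  · -- dom H ≤ dom (triple H)
    have hGne : {n | ∃ X : Finset H.triple.V, ↑X ⊆ (Set.univ : Set H.triple.V) ∧
        (∀ v ∈ (Set.univ : Set H.triple.V), v ∉ X → ∃ x ∈ X, H.triple.adj x v) ∧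
        X.card = n}.Nonempty :=
      ⟨Finset.univ.card, Finset.univ, by simp,
        fun v _ hv => absurd (Finset.mem_univ v) hv, rfl⟩
    obtain ⟨X, -, hX, hcard⟩ := Nat.sInf_mem hGne
    set Y : Finset H.V := X.image Prod.fst with hY
    have hYdom : ∀ v ∈ (Set.univ : Set H.V), v ∉ Y → ∃ y ∈ Y, H.adj y v := by
      intro v _ hvY
      have h0 : ((v, (0 : ZMod 3)) : H.triple.V) ∉ X := fun h =>
        hvY (hY ▸ Finset.mem_image_of_mem Prod.fst h)
      obtain ⟨⟨u, j⟩, hxX, hadj⟩ := hX (v, 0) trivial h0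
      rcases H.triple_adj_imp hadj with rfl | a
      · exact absurd (hY ▸ Finset.mem_image_of_mem Prod.fst hxX) hvY
      · exact ⟨u, hY ▸ Finset.mem_image_of_mem Prod.fst hxX, a⟩
    have h1 : H.dom ≤ Y.card :=
      Nat.sInf_le ⟨Y, Set.subset_univ _, hYdom, rfl⟩
    calc H.dom ≤ Y.card := h1
      _ ≤ X.card := Finset.card_image_le
      _ = H.triple.dom := hcard
  · rintro ⟨v, i⟩
    obtain ⟨hd, hdom⟩ := H.triple_dominator v i
    exact H.triple.domOn_eq_one_of_dominator _ (v, i + 1) hd hdom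
end

section
/- Let ψ : ℕ → ℕ be a function such that for every integer c ≥ 0 and every tournament G with χ(G) ≥ ψ(c) there exists a vertex v of G with χ(N⁺(v)) ≥ c. Then for every integer c ≥ 0 and every tournament G with χ(G) ≥ 2ψ(c), there exists a vertex v of G with χ(N⁺(v)) ≥ c and χ(N⁻(v)) ≥ c. -/
/-!
Let `S` be the set of vertices whose out-neighbourhood has chromatic number at least `c`.
Applying the hypothesis to the subtournament on the complement of `S` shows `χ(Sᶜ) < ψ c`,
so `χ(S) ≥ ψ c`. Applying the hypothesis once more to the reverse of the subtournament on `S`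
gives a vertex of `S` whose in-neighbourhood has chromatic number at least `c`.
-/

namespace Tournament

variable (G : Tournament)

lemma chiOn_le_of_cover_s5 {A : Set G.V} {k : ℕ} (C : Fin k → Set G.V)
    (hC : ∀ i, G.IsTransitiveSet (C i)) (hA : A ⊆ ⋃ i, C i) : G.chiOn A ≤ k :=
  Nat.sInf_le ⟨C, hC, hA⟩

lemma exists_cover_chiOn (A : Set G.V) :
    ∃ C : Fin (G.chiOn A) → Set G.V, (∀ i, G.IsTransitiveSet (C i)) ∧ A ⊆ ⋃ i, C i := by
  refine Nat.sInf_mem (s := {k | ∃ C : Fin k → Set G.V, (∀ i, G.IsTransitiveSet (C i)) ∧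
    A ⊆ ⋃ i, C i}) ⟨Fintype.card G.V, fun i => {(Fintype.equivFin G.V).symm i}, ?_, ?_⟩
  · rintro i a rfl b rfl c - hab -
    exact (G.asymm _ _ hab hab).elim
  · intro v _
    exact Set.mem_iUnion.2 ⟨Fintype.equivFin G.V v, by simp⟩

lemma chiOn_mono_s5 {A B : Set G.V} (h : A ⊆ B) : G.chiOn A ≤ G.chiOn B := by
  obtain ⟨C, hC, hB⟩ := G.exists_cover_chiOn B
  exact G.chiOn_le_of_cover_s5 C hC (h.trans hB)

lemma chiOn_union_le_s5 (A B : Set G.V) : G.chiOn (A ∪ B) ≤ G.chiOn A + G.chiOn B := by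
  obtain ⟨C, hC, hA⟩ := G.exists_cover_chiOn A
  obtain ⟨D, hD, hB⟩ := G.exists_cover_chiOn B
  refine G.chiOn_le_of_cover_s5 (Fin.append C D) (fun i => ?_) ?_
  · refine Fin.addCases (fun j => ?_) (fun j => ?_) i
    · simpa only [Fin.append_left] using hC j
    · simpa only [Fin.append_right] using hD j
  · rintro v (hv | hv)
    · obtain ⟨i, hi⟩ := Set.mem_iUnion.1 (hA hv)
      exact Set.mem_iUnion.2 ⟨Fin.castAdd _ i, by rwa [Fin.append_left]⟩
    · obtain ⟨i, hi⟩ := Set.mem_iUnion.1 (hB hv)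
      exact Set.mem_iUnion.2 ⟨Fin.natAdd _ i, by rwa [Fin.append_right]⟩

noncomputable def induced (A : Set G.V) : Tournament where
  V := A
  fintype := Fintype.ofFinite _
  adj u v := G.adj u v
  asymm _ _ := G.asymm _ _
  total _ _ h := G.total _ _ fun e => h (Subtype.ext e)

lemma chiOn_induced (A : Set G.V) (B : Set (G.induced A).V) :
    (G.induced A).chiOn B = G.chiOn (Subtype.val '' B) := by
  apply le_antisymm
  · obtain ⟨C, hC, hB⟩ := G.exists_cover_chiOn (Subtype.val '' B)
    refine (G.induced A).chiOn_le_of_cover_s5 (fun i => Subtype.val ⁻¹' C i) ?_ ?_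
    · intro i a ha b hb c hc
      exact hC i _ ha _ hb _ hc
    · intro b hb
      obtain ⟨i, hi⟩ := Set.mem_iUnion.1 (hB ⟨b, hb, rfl⟩)
      exact Set.mem_iUnion.2 ⟨i, hi⟩
  · obtain ⟨C, hC, hB⟩ := (G.induced A).exists_cover_chiOn B
    refine G.chiOn_le_of_cover_s5 (fun i => Subtype.val '' C i) ?_ ?_
    · rintro i - ⟨a, ha, rfl⟩ - ⟨b, hb, rfl⟩ - ⟨c, hc, rfl⟩
      exact hC i a ha b hb c hc
    · rintro - ⟨b, hb, rfl⟩
      obtain ⟨i, hi⟩ := Set.mem_iUnion.1 (hB hb)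
      exact Set.mem_iUnion.2 ⟨i, b, hi, rfl⟩

lemma chi_induced (A : Set G.V) : (G.induced A).chi = G.chiOn A := by
  rw [chi, chiOn_induced]
  exact congrArg G.chiOn (Subtype.coe_image_univ A)

lemma image_outN_induced_subset (A : Set G.V) (v : (G.induced A).V) :
    Subtype.val '' (G.induced A).outN v ⊆ G.outN v.1 := by
  rintro - ⟨u, hu, rfl⟩
  exact hu

def reverse : Tournament where
  V := G.V
  fintype := G.fintype
  adj u v := G.adj v u
  asymm _ _ h h' := G.asymm _ _ h' h
  total u v h := (G.total u v h).symm

lemma isTransitiveSet_reverse (A : Set G.V) :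
    G.reverse.IsTransitiveSet A ↔ G.IsTransitiveSet A :=
  ⟨fun h a ha b hb c hc hab hbc hca => h a ha c hc b hb hca hbc hab,
    fun h a ha b hb c hc hab hbc hca => h a ha c hc b hb hca hbc hab⟩

lemma chiOn_reverse (A : Set G.V) : G.reverse.chiOn A = G.chiOn A := by
  unfold chiOn
  congr 1
  ext k
  exact exists_congr fun C =>
    and_congr_left' (forall_congr' fun i => G.isTransitiveSet_reverse (C i))

lemma exists_mem_le_chiOn_outN {k c : ℕ}
    (h : ∀ H : Tournament, k ≤ H.chi → ∃ v : H.V, c ≤ H.chiOn (H.outN v))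
    {A : Set G.V} (hA : k ≤ G.chiOn A) : ∃ v ∈ A, c ≤ G.chiOn (G.outN v) := by
  obtain ⟨v, hv⟩ := h (G.induced A) (by rwa [chi_induced])
  refine ⟨v.1, v.2, hv.trans ?_⟩
  rw [chiOn_induced]
  exact G.chiOn_mono_s5 (G.image_outN_induced_subset A v)

end Tournament

/-- If every tournament with chromatic number at least `ψ c` has a vertex whose
out-neighbourhood has chromatic number at least `c`, then every tournament with
chromatic number at least `2·ψ c` has a vertex `v` with both `χ(N⁺(v)) ≥ c` and
`χ(N⁻(v)) ≥ c`. -/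
theorem in_and_out (ψ : ℕ → ℕ)
    (hψ : ∀ c : ℕ, ∀ G : Tournament, ψ c ≤ G.chi →
      ∃ v : G.V, c ≤ G.chiOn (G.outN v)) :
    ∀ c : ℕ, ∀ G : Tournament, 2 * ψ c ≤ G.chi →
      ∃ v : G.V, c ≤ G.chiOn (G.outN v) ∧ c ≤ G.chiOn (G.inN v) := by
  intro c G hG
  set S : Set G.V := {v | c ≤ G.chiOn (G.outN v)}
  have hSc : G.chiOn Sᶜ < ψ c := by
    by_contra! hle
    obtain ⟨v, hvS, hv⟩ := G.exists_mem_le_chiOn_outN (hψ c) hle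
    exact hvS hv
  have hS : ψ c ≤ G.chiOn S := by
    have := G.chiOn_union_le_s5 S Sᶜ
    rw [Set.union_compl_self] at this
    unfold Tournament.chi at hG
    omega
  obtain ⟨v, hvS, hv⟩ := G.reverse.exists_mem_le_chiOn_outN (hψ c)
    (hS.trans_eq (G.chiOn_reverse S).symm)
  exact ⟨v, hvS, hv.trans (G.chiOn_reverse (G.inN v)).le⟩
end

section
/- Let H be a transitive tournament with h vertices and let σ be any numbering of V(H). Then every ordered tournament (G,τ) whose underlying tournament G has domination number at least h·2^h contains the ordered tournament (H,σ). Consequently, for every transitive tournament H and every numbering σ of V(H), the ordered tournament (H,σ) is a legend. -/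
namespace Tournament

/-- The ordered tournament `(G,τ)` contains the ordered tournament `(H,σ)`. -/
def OrderedContains (G : Tournament) {n : ℕ} (τ : Fin n ≃ G.V)
    (H : Tournament) {h : ℕ} (σ : Fin h ≃ H.V) : Prop :=
  ∃ g : Fin h → Fin n, StrictMono g ∧
    ∀ i j, H.adj (σ i) (σ j) ↔ G.adj (τ (g i)) (τ (g j))

/-- `(H,σ)` is a legend: some `k` is such that every ordered tournament with
domination number at least `k` contains `(H,σ)`. -/
def IsLegend (H : Tournament) {h : ℕ} (σ : Fin h ≃ H.V) : Prop :=
  ∃ k : ℕ, ∀ (G : Tournament) (τ : Fin (Fintype.card G.V) ≃ G.V),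
    k ≤ G.dom → OrderedContains G τ H σ

end Tournament

/-!
Rank the vertices of the transitive tournament `H` so that each beats all lower ones. Since the
domination number is subadditive and grows by at most one per added vertex, `h * h ≤ dom G` lets
us cut the numbering `τ` of `G` into `h` consecutive blocks, each of which needs at least `h`
vertices to be dominated. Then pick vertices greedily in increasing rank: the vertex of rank `a`
is taken from the block of its `σ`-position, and every later block is cut down to the
in-neighbourhood of this choice, which costs at most one in domination. The chosen vertices sit
in the order of `σ` and induce a copy of `H`.
-/

namespace Tournament

variable {T : Tournament}

lemma adj_irrefl (v : T.V) : ¬ T.adj v v := fun h => T.asymm v v h h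

lemma adj_iff_of_adj_imp {G H : Tournament} {f : H.V → G.V}
    (hf : ∀ u v, H.adj u v → G.adj (f u) (f v)) (u v : H.V) :
    H.adj u v ↔ G.adj (f u) (f v) := by
  refine ⟨hf u v, fun h => ?_⟩
  rcases eq_or_ne u v with rfl | huv
  · exact absurd h (G.adj_irrefl _)
  · exact (H.total u v huv).resolve_right fun hvu => G.asymm _ _ h (hf v u hvu)

lemma IsTransitiveSet.adj_trans (hT : T.IsTransitiveSet Set.univ) {a b c : T.V}
    (hab : T.adj a b) (hbc : T.adj b c) : T.adj a c := by
  have hac : a ≠ c := by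
    rintro rfl
    exact T.asymm _ _ hab hbc
  exact (T.total a c hac).resolve_right (hT a trivial b trivial c trivial hab hbc)

lemma IsTransitiveSet.exists_equiv_fin (hT : T.IsTransitiveSet Set.univ) {k : ℕ}
    (hk : Fintype.card T.V = k) : ∃ e : Fin k ≃ T.V, ∀ a b, a < b → T.adj (e b) (e a) := by
  classical
  have : IsStrictTotalOrder T.V (fun x y => T.adj y x) :=
    { trichotomous := fun a b hab hba => by
        by_contra hne
        exact (T.total a b hne).elim hba hab
      irrefl := adj_irrefl
      trans := fun _ _ _ hba hcb => hT.adj_trans hcb hba }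
  let _ : LinearOrder T.V := linearOrderOfSTO (fun x y => T.adj y x)
  exact ⟨(monoEquivOfFin T.V hk).toEquiv, fun a b hab => (monoEquivOfFin T.V hk).strictMono hab⟩

variable (T) in
def Dominates (X : Finset T.V) (A : Set T.V) : Prop :=
  ∀ v ∈ A, v ∉ X → ∃ x ∈ X, T.adj x v

variable (T) in
/-- Unlike `domOn A`, the dominating sets need not lie inside `A`. -/
noncomputable def extDom (A : Set T.V) : ℕ :=
  sInf {n | ∃ X : Finset T.V, T.Dominates X A ∧ X.card = n}

section Dominates

variable {A B : Set T.V} {X Y : Finset T.V}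

lemma Dominates.mono (hX : T.Dominates X B) (hAB : A ⊆ B) : T.Dominates X A :=
  fun v hv => hX v (hAB hv)

lemma Dominates.union [DecidableEq T.V] (hX : T.Dominates X A) (hY : T.Dominates Y B) :
    T.Dominates (X ∪ Y) (A ∪ B) := by
  rintro v (hv | hv) hvXY
  · obtain ⟨x, hx, hxv⟩ := hX v hv fun h => hvXY (Finset.mem_union_left _ h)
    exact ⟨x, Finset.mem_union_left _ hx, hxv⟩
  · obtain ⟨y, hy, hyv⟩ := hY v hv fun h => hvXY (Finset.mem_union_right _ h)
    exact ⟨y, Finset.mem_union_right _ hy, hyv⟩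

lemma Dominates.insert_of_inter_inN [DecidableEq T.V] {v : T.V}
    (hX : T.Dominates X (A ∩ T.inN v)) : T.Dominates (insert v X) A := by
  intro u hu hun
  by_cases hin : u ∈ T.inN v
  · obtain ⟨x, hx, hxu⟩ := hX u ⟨hu, hin⟩ fun h => hun (Finset.mem_insert_of_mem h)
    exact ⟨x, Finset.mem_insert_of_mem hx, hxu⟩
  · have huv : u ≠ v := fun h => hun (h ▸ Finset.mem_insert_self v X)
    exact ⟨v, Finset.mem_insert_self v X, (T.total u v huv).resolve_left hin⟩

lemma extDom_le_card (hX : T.Dominates X A) : T.extDom A ≤ X.card :=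
  Nat.sInf_le ⟨X, hX, rfl⟩

variable (T) in
lemma exists_dominates_card_eq_extDom (A : Set T.V) :
    ∃ X : Finset T.V, T.Dominates X A ∧ X.card = T.extDom A :=
  Nat.sInf_mem (s := {n | ∃ X : Finset T.V, T.Dominates X A ∧ X.card = n})
    ⟨_, Finset.univ, fun v _ hv => absurd (Finset.mem_univ v) hv, rfl⟩

lemma extDom_mono (hAB : A ⊆ B) : T.extDom A ≤ T.extDom B := by
  obtain ⟨X, hX, hXcard⟩ := T.exists_dominates_card_eq_extDom B
  exact hXcard ▸ extDom_le_card (hX.mono hAB)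

variable (A B) in
lemma extDom_union_le : T.extDom (A ∪ B) ≤ T.extDom A + T.extDom B := by
  classical
  obtain ⟨X, hX, hXcard⟩ := T.exists_dominates_card_eq_extDom A
  obtain ⟨Y, hY, hYcard⟩ := T.exists_dominates_card_eq_extDom B
  calc T.extDom (A ∪ B) ≤ (X ∪ Y).card := extDom_le_card (hX.union hY)
    _ ≤ X.card + Y.card := Finset.card_union_le X Y
    _ = T.extDom A + T.extDom B := by rw [hXcard, hYcard]

variable (A) in
lemma extDom_le_extDom_inter_inN_add_one (v : T.V) :
    T.extDom A ≤ T.extDom (A ∩ T.inN v) + 1 := by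
  classical
  obtain ⟨X, hX, hXcard⟩ := T.exists_dominates_card_eq_extDom (A ∩ T.inN v)
  calc T.extDom A ≤ (insert v X).card := extDom_le_card hX.insert_of_inter_inN
    _ ≤ X.card + 1 := Finset.card_insert_le v X
    _ = T.extDom (A ∩ T.inN v) + 1 := by rw [hXcard]

variable (T) in
lemma extDom_empty : T.extDom ∅ = 0 :=
  Nat.le_zero.1 (extDom_le_card (X := ∅) fun v hv => (Set.notMem_empty v hv).elim)

lemma _root_.Set.Subsingleton.extDom_le_one (hA : A.Subsingleton) : T.extDom A ≤ 1 := by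
  rcases hA.eq_empty_or_singleton with rfl | ⟨x, rfl⟩
  · exact (T.extDom_empty).trans_le zero_le_one
  · exact extDom_le_card (X := {x}) fun v hv hvx => absurd (Finset.mem_singleton.2 hv) hvx

lemma nonempty_of_extDom_pos (hA : 0 < T.extDom A) : A.Nonempty := by
  rw [Set.nonempty_iff_ne_empty]
  rintro rfl
  exact hA.ne' T.extDom_empty

end Dominates

variable (T) in
lemma dom_eq_extDom_univ : T.dom = T.extDom Set.univ := by
  unfold dom domOn extDom Dominates
  simp only [Set.subset_univ, true_and]

/-- Choose `w 0` in `C 0`, then recurse on the other sets cut down to the in-neighbourhood of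
`w 0`, which lowers their `extDom` by at most one. -/
lemma exists_chain_of_le_extDom (G : Tournament) {k : ℕ} (C : Fin k → Set G.V)
    (hC : ∀ j, k ≤ G.extDom (C j)) :
    ∃ w : Fin k → G.V, (∀ j, w j ∈ C j) ∧ ∀ a b, a < b → G.adj (w b) (w a) := by
  induction k with
  | zero => exact ⟨Fin.elim0, fun j => j.elim0, fun a => a.elim0⟩
  | succ k ih =>
    obtain ⟨v, hv⟩ := nonempty_of_extDom_pos (lt_of_lt_of_le k.succ_pos (hC 0))
    have hrest : ∀ j : Fin k, k ≤ G.extDom (C j.succ ∩ G.inN v) := fun j => by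
      have := G.extDom_le_extDom_inter_inN_add_one (C j.succ) v
      have := hC j.succ
      omega
    obtain ⟨w, hwC, hwadj⟩ := ih _ hrest
    refine ⟨Fin.cons v w, Fin.cases hv fun j => (hwC j).1, ?_⟩
    intro a b hab
    induction b using Fin.cases with
    | zero => exact absurd hab (Fin.not_lt_zero a)
    | succ b =>
      induction a using Fin.cases with
      | zero => exact (hwC b).2
      | succ a => exact hwadj a b (Fin.succ_lt_succ_iff.1 hab)

end Tournament

def Equiv.block {α : Type*} {N : ℕ} (τ : Fin N ≃ α) (a b : ℕ) : Set α :=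
  {v | (τ.symm v : ℕ) ∈ Set.Ico a b}

namespace Equiv

variable {α : Type*} {N : ℕ} (τ : Fin N ≃ α)

lemma block_self (a : ℕ) : τ.block a a = ∅ := by
  simp [block]

lemma block_zero_eq_univ : τ.block 0 N = _root_.Set.univ := by
  ext v
  simp [block]

lemma block_subset_union (a b c : ℕ) : τ.block a c ⊆ τ.block a b ∪ τ.block b c := by
  intro v hv
  by_cases hb : (τ.symm v : ℕ) < b
  · exact Or.inl ⟨hv.1, hb⟩
  · exact Or.inr ⟨not_lt.1 hb, hv.2⟩

lemma block_succ_subsingleton (b : ℕ) : (τ.block b (b + 1)).Subsingleton := by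
  intro x ⟨hx₁, hx₂⟩ y ⟨hy₁, hy₂⟩
  exact τ.symm.injective (Fin.ext (by omega))

end Equiv

/-- The first cut is the shortest initial interval on which `f` reaches `q`; by `hsucc`, `f` is
exactly `q` there, so by `hsub` at least `m * q` is left for the rest. -/
lemma exists_cuts {f : ℕ → ℕ → ℕ} (hself : ∀ a, f a a = 0)
    (hsucc : ∀ a b, f a (b + 1) ≤ f a b + 1) (hsub : ∀ a b c, f a c ≤ f a b + f b c)
    {q m a b : ℕ} (hab : a ≤ b) (hfab : m * q ≤ f a b) :
    ∃ s : ℕ → ℕ, Monotone s ∧ s 0 = a ∧ ∀ j < m, q ≤ f (s j) (s (j + 1)) := by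
  induction m generalizing a with
  | zero => exact ⟨fun _ => a, monotone_const, rfl, by omega⟩
  | succ m ih =>
    classical
    have hqb : q ≤ f a b := (Nat.le_mul_of_pos_left q m.succ_pos).trans hfab
    have hex : ∃ c, a ≤ c ∧ q ≤ f a c := ⟨b, hab, hqb⟩
    set c := Nat.find hex
    obtain ⟨hac, hqc⟩ : a ≤ c ∧ q ≤ f a c := Nat.find_spec hex
    have hcb : c ≤ b := Nat.find_min' hex ⟨hab, hqb⟩
    have hfc : f a c ≤ q := by
      rcases hac.eq_or_lt with hc | hc
      · rw [← hc, hself]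
        exact Nat.zero_le q
      · obtain ⟨c', hc'⟩ := Nat.exists_eq_add_one_of_ne_zero (Nat.ne_zero_of_lt hc)
        have hmin := Nat.find_min hex (show c' < c by omega)
        have := hsucc a c'
        rw [hc']
        omega
    have hrest : m * q ≤ f c b := by
      have := hsub a c b
      rw [Nat.succ_mul] at hfab
      omega
    obtain ⟨s, hs, hs0, hsq⟩ := ih hcb hrest
    refine ⟨fun t => Nat.casesOn t a s, ?_, rfl, ?_⟩
    · refine monotone_nat_of_le_succ fun t => ?_
      cases t with
      | zero => exact hac.trans hs0.ge
      | succ t => exact hs t.le_succ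
    · intro j hj
      cases j with
      | zero =>
        show q ≤ f a (s 0)
        rwa [hs0]
      | succ j => exact hsq j (by omega)

lemma strictMono_of_mem_cuts {s : ℕ → ℕ} (hs : Monotone s) {k N : ℕ} {g : Fin k → Fin N}
    (hg : ∀ i : Fin k, (g i : ℕ) ∈ Set.Ico (s i) (s (i + 1))) : StrictMono g := by
  intro i j hij
  have := hs (show (i : ℕ) + 1 ≤ j from hij)
  have := (hg i).2
  have := (hg j).1
  rw [Fin.lt_def]
  omega

namespace Tournament

lemma exists_cuts_le_extDom_block (G : Tournament) {n : ℕ} (τ : Fin n ≃ G.V) {m q : ℕ}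
    (hdom : m * q ≤ G.dom) :
    ∃ s : ℕ → ℕ, Monotone s ∧ ∀ j < m, q ≤ G.extDom (τ.block (s j) (s (j + 1))) := by
  have hsub : ∀ a b c,
      G.extDom (τ.block a c) ≤ G.extDom (τ.block a b) + G.extDom (τ.block b c) :=
    fun a b c => (extDom_mono (τ.block_subset_union a b c)).trans (G.extDom_union_le _ _)
  have hsucc : ∀ a b, G.extDom (τ.block a (b + 1)) ≤ G.extDom (τ.block a b) + 1 :=
    fun a b => (hsub a b (b + 1)).trans
      (Nat.add_le_add_left (τ.block_succ_subsingleton b).extDom_le_one _)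
  have hself : ∀ a, G.extDom (τ.block a a) = 0 := fun a => by
    rw [τ.block_self, G.extDom_empty]
  obtain ⟨s, hs, -, hcut⟩ := exists_cuts hself hsucc hsub n.zero_le
    (by rwa [τ.block_zero_eq_univ, ← dom_eq_extDom_univ])
  exact ⟨s, hs, hcut⟩

theorem orderedContains_of_mul_self_le_dom {H : Tournament} (hH : H.IsTransitiveSet Set.univ)
    {h : ℕ} (σ : Fin h ≃ H.V) {G : Tournament} {n : ℕ} (τ : Fin n ≃ G.V)
    (hdom : h * h ≤ G.dom) : OrderedContains G τ H σ := by
  obtain ⟨e, he⟩ :=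
    hH.exists_equiv_fin ((Fintype.card_congr σ).symm.trans (Fintype.card_fin h))
  obtain ⟨s, hs, hcut⟩ := G.exists_cuts_le_extDom_block τ hdom
  -- the vertex of rank `a` in `H` sits at position `p a` of `σ`
  let p : Fin h → Fin h := fun a => σ.symm (e a)
  obtain ⟨w, hwC, hwadj⟩ := G.exists_chain_of_le_extDom
    (fun a => τ.block (s (p a)) (s (p a + 1))) (fun a => hcut _ (p a).isLt)
  let φ : H.V → G.V := fun u => w (e.symm u)
  have hφ : ∀ i : Fin h, (τ.symm (φ (σ i)) : ℕ) ∈ Set.Ico (s i) (s (i + 1)) := fun i => by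
    simpa [φ, p, Equiv.block] using hwC (e.symm (σ i))
  have hadj : ∀ u v, H.adj u v → G.adj (φ u) (φ v) := by
    intro u v huv
    refine hwadj _ _ (lt_of_not_ge fun hle => ?_)
    rcases hle.lt_or_eq with hlt | heq
    · exact H.asymm _ _ huv (by simpa using he _ _ hlt)
    · exact H.adj_irrefl v (e.symm.injective heq ▸ huv)
  refine ⟨fun i => τ.symm (φ (σ i)), strictMono_of_mem_cuts hs hφ, fun i j => ?_⟩
  simpa only [Equiv.apply_symm_apply] using adj_iff_of_adj_imp hadj (σ i) (σ j)

end Tournament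

open Tournament in
/-- Every ordered tournament with domination number at least `h·2^h` contains any
given ordered transitive tournament on `h` vertices; consequently every ordered
transitive tournament is a legend. -/
theorem transitive_is_legend (H : Tournament) (hH : H.IsTransitiveSet Set.univ)
    (σ : Fin (Fintype.card H.V) ≃ H.V) :
    (∀ (G : Tournament) (τ : Fin (Fintype.card G.V) ≃ G.V),
        Fintype.card H.V * 2 ^ Fintype.card H.V ≤ G.dom →
        OrderedContains G τ H σ) ∧
      IsLegend H σ := by
  have key : ∀ (G : Tournament) (τ : Fin (Fintype.card G.V) ≃ G.V),
      Fintype.card H.V * 2 ^ Fintype.card H.V ≤ G.dom → OrderedContains G τ H σ :=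
    fun _ τ hdom => orderedContains_of_mul_self_le_dom hH σ τ
      ((Nat.mul_le_mul_left _ Nat.lt_two_pow_self.le).trans hdom)
  exact ⟨key, _, key⟩
end

section
/- Let H1 and H2 be rebels, and let H be the tournament obtained from the disjoint union of H1 and H2 by directing every edge between them from V(H1) to V(H2). Then H is a rebel. -/
namespace Tournament

/-- The one-vertex tournament. -/
def oneT : Tournament where
  V := PUnit
  fintype := inferInstance
  adj _ _ := False
  asymm := by intro u v h; exact h.elim
  total := by intro u v h; cases u; cases v; exact absurd rfl h

/-- `Δ(H1,H2,H3)`: disjoint copies of `H1,H2,H3` with `A1 ⇒ A2 ⇒ A3 ⇒ A1`. -/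
def delta (H1 H2 H3 : Tournament) : Tournament where
  V := H1.V ⊕ H2.V ⊕ H3.V
  fintype := inferInstance
  adj x y :=
    match x, y with
    | .inl a, .inl b => H1.adj a b
    | .inl _, .inr (.inl _) => True
    | .inl _, .inr (.inr _) => False
    | .inr (.inl _), .inl _ => False
    | .inr (.inl a), .inr (.inl b) => H2.adj a b
    | .inr (.inl _), .inr (.inr _) => True
    | .inr (.inr _), .inl _ => True
    | .inr (.inr _), .inr (.inl _) => False
    | .inr (.inr a), .inr (.inr b) => H3.adj a b
  asymm := by
    rintro (a | a | a) (b | b | b) h <;> simp only at h ⊢ <;>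
      first
        | exact H1.asymm _ _ h
        | exact H2.asymm _ _ h
        | exact H3.asymm _ _ h
        | exact h
        | exact fun h' => h'
  total := by
    rintro (a | a | a) (b | b | b) h <;> simp only at h ⊢ <;>
      first
        | exact H1.total _ _ (by simpa using h)
        | exact H2.total _ _ (by simpa using h)
        | exact H3.total _ _ (by simpa using h)
        | exact Or.inl trivial
        | exact Or.inr trivial

/-- The tournament obtained from disjoint copies of `H1, H2` by directing
all edges from the copy of `H1` to the copy of `H2`. -/
def join2 (H1 H2 : Tournament) : Tournament where
  V := H1.V ⊕ H2.V
  fintype := inferInstance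
  adj x y :=
    match x, y with
    | .inl a, .inl b => H1.adj a b
    | .inl _, .inr _ => True
    | .inr _, .inl _ => False
    | .inr a, .inr b => H2.adj a b
  asymm := by
    rintro (a | a) (b | b) h <;> simp only at h ⊢ <;>
      first
        | exact H1.asymm _ _ h
        | exact H2.asymm _ _ h
        | exact h
        | exact fun h' => h'
  total := by
    rintro (a | a) (b | b) h <;> simp only at h ⊢ <;>
      first
        | exact H1.total _ _ (by simpa using h)
        | exact H2.total _ _ (by simpa using h)
        | exact Or.inl trivial
        | exact Or.inr trivial

end Tournament

noncomputable def Tournament.subT (G : Tournament) (S : Set G.V) : Tournament where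
  V := S
  fintype := (Set.toFinite S).fintype
  adj a b := G.adj a b
  asymm := fun u v h => G.asymm u v h
  total := fun u v h => G.total u v (fun e => h (Subtype.ext e))

lemma Tournament.dom_le_card (G : Tournament) (X : Finset G.V)
    (h : ∀ v, v ∉ X → ∃ x ∈ X, G.adj x v) : G.dom ≤ X.card :=
  Nat.sInf_le ⟨X, by simp, fun v _ hv => h v hv, rfl⟩

lemma Tournament.dom_nonempty (G : Tournament) :
    {n | ∃ X : Finset G.V, ↑X ⊆ (Set.univ : Set G.V) ∧
      (∀ v ∈ (Set.univ : Set G.V), v ∉ X → ∃ x ∈ X, G.adj x v) ∧ X.card = n}.Nonempty :=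
  ⟨Finset.univ.card, Finset.univ, by simp, fun v _ hv => absurd (Finset.mem_univ v) hv, rfl⟩

/-- If `H1, H2` are rebels, then the tournament obtained from their disjoint union
by directing all edges from `V(H1)` to `V(H2)` is a rebel. -/
theorem join_of_rebels (H1 H2 : Tournament)
    (h1 : H1.IsRebel) (h2 : H2.IsRebel) :
    (H1.join2 H2).IsRebel := by
  classical
  obtain ⟨c1, hc1pos, hc1⟩ := h1
  obtain ⟨c2, hc2pos, hc2⟩ := h2
  refine ⟨c1 + Fintype.card H2.V + c2, by positivity, ?_⟩
  intro G hG
  by_cases hH2 : G.Contains H2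
  · obtain ⟨f, hf, -, hadj⟩ := hH2
    set A : Finset G.V := Finset.univ.image f with hA
    set S : Set G.V := {v | ∀ u, G.adj v (f u)} with hS
    -- subtournament on S is H1-free
    have hfree : ¬ (G.subT S).Contains H1 := by
      rintro ⟨g, hg, -, hgadj⟩
      apply hG
      refine ⟨fun x => Sum.elim (fun a => (g a).1) f x, ?_, fun _ => trivial, ?_⟩
      · rintro (a | a) (b | b) h <;> simp only [Sum.elim_inl, Sum.elim_inr] at h
        · exact congrArg Sum.inl (hg (Subtype.ext h))
        · have := (g a).2 b; rw [h] at this; exact absurd this (G.asymm _ _ this)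
        · have := (g b).2 a; rw [← h] at this; exact absurd this (G.asymm _ _ this)
        · exact congrArg Sum.inr (hf h)
      · rintro (a | a) (b | b) <;> simp only [Tournament.join2, Sum.elim_inl, Sum.elim_inr]
        · exact hgadj a b
        · simp only [true_iff]; exact (g a).2 b
        · simp only [false_iff]; exact G.asymm _ _ ((g b).2 a)
        · exact hadj a b
    have hdom := hc1 _ hfree
    have hmem := Nat.sInf_mem (G.subT S).dom_nonempty
    obtain ⟨X', hX'sub, hX'dom, hX'card⟩ := hmem
    rw [show sInf _ = (G.subT S).dom from rfl] at hX'card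
    set X : Finset G.V := X'.image Subtype.val ∪ A with hX
    have hdomG : ∀ v, v ∉ X → ∃ x ∈ X, G.adj x v := by
      intro v hv
      by_cases hbeat : ∃ a ∈ A, G.adj a v
      · obtain ⟨a, ha, hav⟩ := hbeat
        exact ⟨a, Finset.mem_union_right _ ha, hav⟩
      · push_neg at hbeat
        have hvA : v ∉ A := fun h => hv (Finset.mem_union_right _ h)
        have hvS : v ∈ S := by
          intro u
          have hne : v ≠ f u := fun e => hvA (e ▸ Finset.mem_image_of_mem f (Finset.mem_univ u))
          rcases G.total v (f u) hne with h | h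
          · exact h
          · exact absurd h (hbeat _ (Finset.mem_image_of_mem f (Finset.mem_univ u)))
        have hvX' : (⟨v, hvS⟩ : S) ∉ X' := fun h =>
          hv (Finset.mem_union_left _ (Finset.mem_image_of_mem _ h))
        obtain ⟨x, hx, hxv⟩ := hX'dom ⟨v, hvS⟩ trivial hvX'
        exact ⟨x.1, Finset.mem_union_left _ (Finset.mem_image_of_mem _ hx), hxv⟩
    have h1 : G.dom ≤ X.card := G.dom_le_card X hdomG
    have h2 : X.card ≤ X'.card + A.card := (Finset.card_union_le _ _).trans
      (by gcongr; exact Finset.card_image_le)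
    have h3 : A.card ≤ Fintype.card H2.V := Finset.card_image_le.trans (by simp)
    have h4 : X'.card < c1 := hX'card ▸ hdom
    omega
  · have := hc2 G hH2
    omega
end

section
/- If a tournament G admits a numbering with local chromatic number at most c, then dom(G) ≤ c + 1. -/
namespace Tournament

/-- The set of backward out-neighbours and forward in-neighbours of the `i`-th
vertex of the numbering `σ`. -/
def localSet (G : Tournament) {n : ℕ} (σ : Fin n ≃ G.V) (i : Fin n) : Set G.V :=
  {v | ∃ j : Fin n, v = σ j ∧
    ((j < i ∧ G.adj (σ i) (σ j)) ∨ (i < j ∧ G.adj (σ j) (σ i)))}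

/-- The numbering `σ` has local chromatic number at most `c`. -/
def LocalChiLE (G : Tournament) {n : ℕ} (σ : Fin n ≃ G.V) (c : ℕ) : Prop :=
  ∀ i : Fin n, G.chiOn (G.localSet σ i) ≤ c
end Tournament


/-- every finite nonempty transitive set has a source -/
theorem exists_source_aux (T : Tournament) (S : Finset T.V)
    (hT : T.IsTransitiveSet ↑S) (hne : S.Nonempty) :
    ∃ a ∈ S, ∀ b ∈ S, b ≠ a → T.adj a b := by
  classical
  induction S using Finset.induction with
  | empty => simp at hne
  | @insert x S hx ih =>
    by_cases hS : S.Nonempty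
    · have hT' : T.IsTransitiveSet ↑S := by
        intro a ha b hb c hc
        exact hT a (by simp [ha]) b (by simp [hb]) c (by simp [hc])
      obtain ⟨a, haS, ha⟩ := ih hT' hS
      by_cases hxa : T.adj x a
      · refine ⟨x, by simp, ?_⟩
        intro b hb hbx
        rcases Finset.mem_insert.mp hb with h | h
        · exact absurd h hbx
        · by_cases hba : b = a
          · exact hba ▸ hxa
          · have hab := ha b h hba
            have hnbx : ¬ T.adj b x :=
              hT x (by simp) a (by simp [haS]) b (by simp [h]) hxa hab
            have hxb : x ≠ b := fun e => hx (e ▸ h)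
            rcases T.total x b hxb with h' | h'
            · exact h'
            · exact absurd h' hnbx
      · refine ⟨a, by simp [haS], ?_⟩
        intro b hb hba
        rcases Finset.mem_insert.mp hb with h | h
        · subst h
          have hax : a ≠ b := fun e => hx (e ▸ haS)
          rcases T.total a b hax with h' | h'
          · exact h'
          · exact absurd h' hxa
        · exact ha b h hba
    · have : S = ∅ := Finset.not_nonempty_iff_eq_empty.mp hS
      subst this
      refine ⟨x, by simp, ?_⟩
      intro b hb hbx
      simp at hb
      exact absurd hb hbx

/-- If a tournament admits a numbering with local chromatic number at most `c`,
then its domination number is at most `c + 1`. -/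
theorem numbering_to_small_dom (G : Tournament) (c : ℕ)
    (σ : Fin (Fintype.card G.V) ≃ G.V) (h : G.LocalChiLE σ c) :
    G.dom ≤ c + 1 := by
  classical
  rcases Nat.eq_zero_or_pos (Fintype.card G.V) with h0 | hpos
  · have hempty : IsEmpty G.V := Fintype.card_eq_zero_iff.mp h0
    have hmem : (0 : ℕ) ∈ {m | ∃ X : Finset G.V, ↑X ⊆ (Set.univ : Set G.V) ∧
        (∀ v ∈ (Set.univ : Set G.V), v ∉ X → ∃ x ∈ X, G.adj x v) ∧ X.card = m} :=
      ⟨∅, by simp, fun v _ _ => (hempty.false v).elim, by simp⟩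
    have hle : G.dom ≤ 0 := Nat.sInf_le hmem
    omega
  · set i0 : Fin (Fintype.card G.V) := ⟨0, hpos⟩ with hi0
    set v : G.V := σ i0 with hv
    have hirr : ∀ u : G.V, ¬ G.adj u u := fun u hu => G.asymm u u hu hu
    have hloc : ∀ u : G.V, G.adj u v → u ∈ G.localSet σ i0 := by
      intro u hu
      have hne : σ.symm u ≠ i0 := by
        intro e
        have : u = v := by rw [hv, ← e, σ.apply_symm_apply]
        exact hirr v (this ▸ hu)
      have hlt : i0 < σ.symm u := by
        rw [Fin.lt_def]
        exact Nat.pos_of_ne_zero (fun e => hne (Fin.ext e))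
      exact ⟨σ.symm u, by simp, Or.inr ⟨hlt, by simpa using hu⟩⟩
    have hKne : Fintype.card G.V ∈ {k | ∃ C : Fin k → Set G.V,
        (∀ i, G.IsTransitiveSet (C i)) ∧ G.localSet σ i0 ⊆ ⋃ i, C i} := by
      refine ⟨fun i => {σ i}, ?_, ?_⟩
      · intro i a ha b hb c' hc hab _
        simp only [Set.mem_singleton_iff] at ha hb
        subst ha; subst hb
        exact fun _ => hirr _ hab
      · intro u _
        exact Set.mem_iUnion.mpr ⟨σ.symm u, by simp⟩
    have hmem : G.chiOn (G.localSet σ i0) ∈ {k | ∃ C : Fin k → Set G.V,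
        (∀ i, G.IsTransitiveSet (C i)) ∧ G.localSet σ i0 ⊆ ⋃ i, C i} :=
      Nat.sInf_mem ⟨_, hKne⟩
    set k := G.chiOn (G.localSet σ i0) with hkdef
    have hk : k ≤ c := h i0
    obtain ⟨C, hCtrans, hCcov⟩ := hmem
    set S : Fin k → Set G.V := fun i => C i ∩ {u | G.adj u v} with hS
    have hsrc : ∀ i : Fin k, ∃ a : G.V, (S i).Nonempty →
        a ∈ S i ∧ ∀ b ∈ S i, b ≠ a → G.adj a b := by
      intro i
      by_cases hne : (S i).Nonempty
      · have hfin := Set.toFinite (S i)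
        have htr : G.IsTransitiveSet ↑hfin.toFinset := by
          rw [Set.Finite.coe_toFinset]
          intro a ha b hb c' hc
          exact hCtrans i a ha.1 b hb.1 c' hc.1
        obtain ⟨a, haS, ha⟩ := exists_source_aux G hfin.toFinset htr
          ((Set.Finite.toFinset_nonempty hfin).mpr hne)
        rw [Set.Finite.mem_toFinset] at haS
        refine ⟨a, fun _ => ⟨haS, fun b hb hba => ?_⟩⟩
        exact ha b ((Set.Finite.mem_toFinset hfin).mpr hb) hba
      · exact ⟨v, fun hne' => absurd hne' hne⟩
    choose f hf using hsrc
    set X : Finset G.V := insert v (Finset.image f Finset.univ) with hX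
    have hdomX : ∀ u : G.V, u ∉ X → ∃ x ∈ X, G.adj x u := by
      intro u hu
      have huv : u ≠ v := fun e => hu (e ▸ Finset.mem_insert_self v _)
      rcases G.total v u (Ne.symm huv) with hvu | huv'
      · exact ⟨v, Finset.mem_insert_self _ _, hvu⟩
      · obtain ⟨i, hi⟩ := Set.mem_iUnion.mp (hCcov (hloc u huv'))
        have huS : u ∈ S i := ⟨hi, huv'⟩
        obtain ⟨hfS, hfdom⟩ := hf i ⟨u, huS⟩
        have hfX : f i ∈ X := Finset.mem_insert_of_mem
          (Finset.mem_image.mpr ⟨i, Finset.mem_univ i, rfl⟩)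
        by_cases e : u = f i
        · exact absurd (e ▸ hfX) hu
        · exact ⟨f i, hfX, hfdom u huS e⟩
    have hdle : G.dom ≤ X.card :=
      Nat.sInf_le ⟨X, by simp, fun u _ hu => hdomX u hu, rfl⟩
    have hcard : X.card ≤ c + 1 := by
      calc X.card ≤ (Finset.image f Finset.univ).card + 1 := Finset.card_insert_le _ _
        _ ≤ (Finset.univ : Finset (Fin k)).card + 1 := by
            exact Nat.add_le_add_right (Finset.card_image_le) 1
        _ = k + 1 := by simp
        _ ≤ c + 1 := by omega
    omega
end

section
/- For every integer matching P there is an integer matching Q with the property that for all Q1, Q2 with Q1 ∪ Q2 = Q, some copy of P is a subset of Q1 or a subset of Q2. -/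
/-- An integer matching: a finite set of pairs `(a,b)` of integers with `a < b`,
all the integers used being pairwise distinct. -/
def IsIntMatching (P : Finset (ℤ × ℤ)) : Prop :=
  (∀ p ∈ P, p.1 < p.2) ∧
    ∀ p ∈ P, ∀ q ∈ P, p ≠ q →
      p.1 ≠ q.1 ∧ p.1 ≠ q.2 ∧ p.2 ≠ q.1 ∧ p.2 ≠ q.2

/-- The set of ends of an integer matching. -/
def ends (P : Finset (ℤ × ℤ)) : Finset ℤ := P.image Prod.fst ∪ P.image Prod.snd

/-- `Q` is a copy of `P`: the (unique) order-preserving bijection from the ends of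
`P` to the ends of `Q` maps the set of pairs `P` onto the set of pairs `Q`. -/
def IsCopy (P Q : Finset (ℤ × ℤ)) : Prop :=
  ∃ f : ℤ → ℤ, StrictMonoOn f ↑(ends P) ∧
    (ends P).image f = ends Q ∧ P.image (fun p => (f p.1, f p.2)) = Q

/- ### Auxiliary material -/

/-- Finite Ramsey theorem for pairs, two colours. -/
theorem ramsey2 : ∀ s t : ℕ, ∃ N : ℕ, ∀ (V : Finset ℕ) (f : ℕ → ℕ → Bool),
    N ≤ V.card → ∃ H ⊆ V,
      (s ≤ H.card ∧ ∀ x ∈ H, ∀ y ∈ H, x < y → f x y = true) ∨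
      (t ≤ H.card ∧ ∀ x ∈ H, ∀ y ∈ H, x < y → f x y = false) := by
  intro s
  induction s with
  | zero =>
    intro t
    exact ⟨0, fun V f _ => ⟨∅, Finset.empty_subset _,
      Or.inl ⟨Nat.zero_le _, by simp⟩⟩⟩
  | succ s ihs =>
    intro t
    induction t with
    | zero =>
      exact ⟨0, fun V f _ => ⟨∅, Finset.empty_subset _,
        Or.inr ⟨Nat.zero_le _, by simp⟩⟩⟩
    | succ t iht =>
      obtain ⟨N₁, hN₁⟩ := ihs (t + 1)
      obtain ⟨N₂, hN₂⟩ := iht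
      refine ⟨N₁ + N₂ + 1, fun V f hV => ?_⟩
      have hVne : V.Nonempty := Finset.card_pos.mp (by omega)
      set v := V.min' hVne with hv
      have hvV : v ∈ V := V.min'_mem hVne
      set V' := V.erase v with hV'
      have hV'card : N₁ + N₂ ≤ V'.card := by
        rw [hV', Finset.card_erase_of_mem hvV]; omega
      classical
      set A := V'.filter (fun x => f v x = true) with hA
      set B := V'.filter (fun x => f v x = false) with hB
      have hAB : A.card + B.card = V'.card := by
        rw [hA, hB]
        have := Finset.card_filter_add_card_filter_not
          (s := V') (p := fun x => f v x = true)
        simpa using this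
      have hcases : N₁ ≤ A.card ∨ N₂ ≤ B.card := by omega
      rcases hcases with hc | hc
      · obtain ⟨H, hHA, hH⟩ := hN₁ A f hc
        have hHV' : H ⊆ V' := hHA.trans (Finset.filter_subset _ _)
        have hHV : H ⊆ V := hHV'.trans (Finset.erase_subset _ _)
        rcases hH with ⟨hcard, hmono⟩ | ⟨hcard, hmono⟩
        · refine ⟨insert v H, Finset.insert_subset hvV hHV, Or.inl ⟨?_, ?_⟩⟩
          · have hvH : v ∉ H := fun h => (Finset.mem_erase.mp (hHV' h)).1 rfl
            rw [Finset.card_insert_of_notMem hvH]; omega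
          · intro x hx y hy hxy
            rcases Finset.mem_insert.mp hx with rfl | hx
            · rcases Finset.mem_insert.mp hy with rfl | hy
              · omega
              · exact (Finset.mem_filter.mp (hHA hy)).2
            · rcases Finset.mem_insert.mp hy with rfl | hy
              · exact absurd (V.min'_le x (hHV hx)) (by omega)
              · exact hmono x hx y hy hxy
        · exact ⟨H, hHV, Or.inr ⟨hcard, hmono⟩⟩
      · obtain ⟨H, hHB, hH⟩ := hN₂ B f hc
        have hHV' : H ⊆ V' := hHB.trans (Finset.filter_subset _ _)
        have hHV : H ⊆ V := hHV'.trans (Finset.erase_subset _ _)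
        rcases hH with ⟨hcard, hmono⟩ | ⟨hcard, hmono⟩
        · exact ⟨H, hHV, Or.inl ⟨hcard, hmono⟩⟩
        · refine ⟨insert v H, Finset.insert_subset hvV hHV, Or.inr ⟨?_, ?_⟩⟩
          · have hvH : v ∉ H := fun h => (Finset.mem_erase.mp (hHV' h)).1 rfl
            rw [Finset.card_insert_of_notMem hvH]; omega
          · intro x hx y hy hxy
            rcases Finset.mem_insert.mp hx with rfl | hx
            · rcases Finset.mem_insert.mp hy with rfl | hy
              · omega
              · exact (Finset.mem_filter.mp (hHB hy)).2
            · rcases Finset.mem_insert.mp hy with rfl | hy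
              · exact absurd (V.min'_le x (hHV hx)) (by omega)
              · exact hmono x hx y hy hxy

/-- Encoding of an index pair as a natural number. -/
def encN (N x y : ℕ) : ℕ := y + x * (N + 1)

lemma encN_inj {N x y u v : ℕ} (hy : y < N + 1) (hv : v < N + 1)
    (h : encN N x y = encN N u v) : x = u ∧ y = v := by
  unfold encN at h
  have hx : x = u := by
    have h1 : (y + x * (N + 1)) / (N + 1) = x := by
      rw [Nat.add_mul_div_right _ _ (Nat.succ_pos N), Nat.div_eq_of_lt hy, Nat.zero_add]
    have h2 : (v + u * (N + 1)) / (N + 1) = u := by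
      rw [Nat.add_mul_div_right _ _ (Nat.succ_pos N), Nat.div_eq_of_lt hv, Nat.zero_add]
    rw [← h1, ← h2, h]
  subst hx
  exact ⟨rfl, by omega⟩

lemma encN_lt {N x y : ℕ} (hxy : x < y) (hy : y < N + 1) :
    encN N x y < encN N y x := by
  unfold encN
  have h1 : x * (N + 1) + (N + 1) ≤ y * (N + 1) := by
    have hx1 : x + 1 ≤ y := hxy
    calc x * (N + 1) + (N + 1) = (x + 1) * (N + 1) := by ring
    _ ≤ y * (N + 1) := Nat.mul_le_mul_right _ hx1
  omega

lemma card_ends (P : Finset (ℤ × ℤ)) (hP : IsIntMatching P) :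
    (ends P).card = 2 * P.card := by
  have hinj1 : Set.InjOn Prod.fst (P : Set (ℤ × ℤ)) := by
    intro p hp q hq h
    by_contra hne
    exact (hP.2 p hp q hq hne).1 h
  have hinj2 : Set.InjOn Prod.snd (P : Set (ℤ × ℤ)) := by
    intro p hp q hq h
    by_contra hne
    exact (hP.2 p hp q hq hne).2.2.2 h
  have hdisj : Disjoint (P.image Prod.fst) (P.image Prod.snd) := by
    rw [Finset.disjoint_left]
    intro z hz1 hz2
    obtain ⟨p, hp, hpz⟩ := Finset.mem_image.mp hz1
    obtain ⟨q, hq, hqz⟩ := Finset.mem_image.mp hz2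
    by_cases hpq : p = q
    · subst hpq
      exact absurd (hpz.trans hqz.symm) (ne_of_lt (hP.1 p hp))
    · exact (hP.2 p hp q hq hpq).2.1 (hpz.trans hqz.symm)
  rw [ends, Finset.card_union_of_disjoint hdisj,
    Finset.card_image_of_injOn hinj1, Finset.card_image_of_injOn hinj2]
  omega

noncomputable def wfun (P : Finset (ℤ × ℤ)) (z : ℤ) : ℤ × ℤ :=
  if h : ∃ p, p ∈ P ∧ (p.1 = z ∨ p.2 = z) then h.choose else (0, 0)

noncomputable def pnr (P : Finset (ℤ × ℤ)) (z : ℤ) : ℤ :=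
  if (wfun P z).1 = z then (wfun P z).2 else (wfun P z).1

lemma wfun_eq {P : Finset (ℤ × ℤ)} (hP : IsIntMatching P) {p : ℤ × ℤ} (hp : p ∈ P) :
    wfun P p.1 = p ∧ wfun P p.2 = p := by
  constructor
  · have hex : ∃ q, q ∈ P ∧ (q.1 = p.1 ∨ q.2 = p.1) := ⟨p, hp, Or.inl rfl⟩
    have hspec := hex.choose_spec
    have hq : hex.choose = p := by
      by_contra hne
      obtain ⟨h1, h2, h3, h4⟩ := hP.2 _ hspec.1 p hp hne
      rcases hspec.2 with h | h
      · exact h1 h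
      · exact h3 h
    rw [wfun, dif_pos hex, hq]
  · have hex : ∃ q, q ∈ P ∧ (q.1 = p.2 ∨ q.2 = p.2) := ⟨p, hp, Or.inr rfl⟩
    have hspec := hex.choose_spec
    have hq : hex.choose = p := by
      by_contra hne
      obtain ⟨h1, h2, h3, h4⟩ := hP.2 _ hspec.1 p hp hne
      rcases hspec.2 with h | h
      · exact h2 h
      · exact h4 h
    rw [wfun, dif_pos hex, hq]

lemma pnr_eq {P : Finset (ℤ × ℤ)} (hP : IsIntMatching P) {p : ℤ × ℤ} (hp : p ∈ P) :
    pnr P p.1 = p.2 ∧ pnr P p.2 = p.1 := by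
  obtain ⟨h1, h2⟩ := wfun_eq hP hp
  constructor
  · rw [pnr, h1, if_pos rfl]
  · rw [pnr, h2, if_neg (ne_of_lt (hP.1 p hp))]

lemma mem_ends {P : Finset (ℤ × ℤ)} {p : ℤ × ℤ} (hp : p ∈ P) :
    p.1 ∈ ends P ∧ p.2 ∈ ends P := by
  constructor
  · exact Finset.mem_union_left _ (Finset.mem_image.mpr ⟨p, hp, rfl⟩)
  · exact Finset.mem_union_right _ (Finset.mem_image.mpr ⟨p, hp, rfl⟩)

lemma ends_mem {P : Finset (ℤ × ℤ)} {z : ℤ} (hz : z ∈ ends P) :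
    ∃ p, p ∈ P ∧ (p.1 = z ∨ p.2 = z) := by
  rcases Finset.mem_union.mp hz with h | h
  · obtain ⟨p, hp, hpz⟩ := Finset.mem_image.mp h
    exact ⟨p, hp, Or.inl hpz⟩
  · obtain ⟨p, hp, hpz⟩ := Finset.mem_image.mp h
    exact ⟨p, hp, Or.inr hpz⟩

lemma pnr_mem_ends {P : Finset (ℤ × ℤ)} (hP : IsIntMatching P) {z : ℤ}
    (hz : z ∈ ends P) : pnr P z ∈ ends P := by
  obtain ⟨p, hp, hpz⟩ := ends_mem hz
  rcases hpz with h | h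
  · rw [← h, (pnr_eq hP hp).1]; exact (mem_ends hp).2
  · rw [← h, (pnr_eq hP hp).2]; exact (mem_ends hp).1

/-- The key embedding lemma: any set `S` of at least `2 |P|` indices below `N`
supports a copy of `P` among the encoded edges. -/
lemma exists_copy (P : Finset (ℤ × ℤ)) (hP : IsIntMatching P) (N : ℕ) (S : Finset ℕ)
    (hSN : S ⊆ Finset.range N) (hcard : 2 * P.card ≤ S.card) :
    ∃ P' : Finset (ℤ × ℤ), IsCopy P P' ∧
      ∀ p ∈ P', ∃ x ∈ S, ∃ y ∈ S, x < y ∧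
        p = ((encN N x y : ℤ), (encN N y x : ℤ)) := by
  classical
  have hcard' : (ends P).card ≤ S.card := by rw [card_ends P hP]; exact hcard
  obtain ⟨S', hS'S, hS'card⟩ := Finset.exists_subset_card_eq hcard'
  have hgn : ∃ gn : ℤ → ℕ, (∀ z ∈ ends P, gn z ∈ S) ∧
      (∀ z ∈ ends P, ∀ z' ∈ ends P, z < z' → gn z < gn z') := by
    have eP : Fin ((ends P).card) ≃o {x // x ∈ ends P} := (ends P).orderIsoOfFin rfl
    have eS : Fin ((ends P).card) ≃o {x // x ∈ S'} := S'.orderIsoOfFin hS'card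
    refine ⟨fun z => if h : z ∈ ends P then (eS (eP.symm ⟨z, h⟩) : ℕ) else 0, ?_, ?_⟩
    · intro z hz
      simp only [dif_pos hz]
      exact hS'S (eS (eP.symm ⟨z, hz⟩)).2
    · intro z hz z' hz' hlt
      simp only [dif_pos hz, dif_pos hz']
      have h1 : (⟨z, hz⟩ : {x // x ∈ ends P}) < ⟨z', hz'⟩ := Subtype.mk_lt_mk.mpr hlt
      have h2 : eP.symm ⟨z, hz⟩ < eP.symm ⟨z', hz'⟩ := eP.symm.lt_iff_lt.mpr h1
      have h3 : eS (eP.symm ⟨z, hz⟩) < eS (eP.symm ⟨z', hz'⟩) := eS.lt_iff_lt.mpr h2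
      exact Subtype.coe_lt_coe.mpr h3
  obtain ⟨gn, hgnS, hgnmono⟩ := hgn
  have hgnN : ∀ z ∈ ends P, gn z < N + 1 := by
    intro z hz
    have := Finset.mem_range.mp (hSN (hgnS z hz))
    omega
  obtain ⟨f, hf⟩ : ∃ f : ℤ → ℤ, ∀ z, f z = ((encN N (gn z) (gn (pnr P z)) : ℕ) : ℤ) :=
    ⟨_, fun _ => rfl⟩
  have hfmono : StrictMonoOn f ↑(ends P) := by
    intro z hz z' hz' hlt
    rw [Finset.mem_coe] at hz hz'
    have harith : encN N (gn z) (gn (pnr P z)) < encN N (gn z') (gn (pnr P z')) := by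
      have hzz' := hgnmono z hz z' hz' hlt
      have hb : gn (pnr P z) < N + 1 := hgnN _ (pnr_mem_ends hP hz)
      unfold encN
      nlinarith
    rw [hf z, hf z']
    exact_mod_cast harith
  have hfp : ∀ p ∈ P, f p.1 = ((encN N (gn p.1) (gn p.2) : ℕ) : ℤ) ∧
      f p.2 = ((encN N (gn p.2) (gn p.1) : ℕ) : ℤ) := by
    intro p hp
    constructor
    · rw [hf, (pnr_eq hP hp).1]
    · rw [hf, (pnr_eq hP hp).2]
  refine ⟨P.image (fun p => (f p.1, f p.2)), ⟨f, hfmono, ?_, rfl⟩, ?_⟩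
  · rw [ends, ends, Finset.image_union, Finset.image_image, Finset.image_image,
      Finset.image_image, Finset.image_image]
    rfl
  · intro p' hp'
    obtain ⟨p, hp, rfl⟩ := Finset.mem_image.mp hp'
    have h1 := (mem_ends hp).1
    have h2 := (mem_ends hp).2
    refine ⟨gn p.1, hgnS _ h1, gn p.2, hgnS _ h2,
      hgnmono _ h1 _ h2 (hP.1 p hp), ?_⟩
    rw [(hfp p hp).1, (hfp p hp).2]


/-- For every integer matching `P` there is an integer matching `Q` such that for
all `Q1, Q2` with `Q1 ∪ Q2 = Q`, some copy of `P` is a subset of `Q1` or of `Q2`. -/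
theorem matching_ramsey (P : Finset (ℤ × ℤ)) (hP : IsIntMatching P) :
    ∃ Q : Finset (ℤ × ℤ), IsIntMatching Q ∧
      ∀ Q1 Q2 : Finset (ℤ × ℤ), Q1 ∪ Q2 = Q →
        ∃ P' : Finset (ℤ × ℤ), IsCopy P P' ∧ (P' ⊆ Q1 ∨ P' ⊆ Q2) := by
  classical
  obtain ⟨N, hN⟩ := ramsey2 (2 * P.card) (2 * P.card)
  set Q : Finset (ℤ × ℤ) :=
    ((Finset.range N ×ˢ Finset.range N).filter (fun xy => xy.1 < xy.2)).image
      (fun xy => ((encN N xy.1 xy.2 : ℤ), (encN N xy.2 xy.1 : ℤ))) with hQdef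
  have hmemQ : ∀ x y : ℕ, x < y → y < N →
      ((encN N x y : ℤ), (encN N y x : ℤ)) ∈ Q := by
    intro x y hxy hyN
    rw [hQdef]
    exact Finset.mem_image.mpr ⟨(x, y), Finset.mem_filter.mpr
      ⟨Finset.mem_product.mpr ⟨Finset.mem_range.mpr (by omega),
        Finset.mem_range.mpr hyN⟩, hxy⟩, rfl⟩
  have hQmem : ∀ p ∈ Q, ∃ x y : ℕ, x < y ∧ y < N ∧
      p = ((encN N x y : ℤ), (encN N y x : ℤ)) := by
    intro p hp
    rw [hQdef] at hp
    obtain ⟨xy, hxy, rfl⟩ := Finset.mem_image.mp hp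
    obtain ⟨hprod, hlt⟩ := Finset.mem_filter.mp hxy
    exact ⟨xy.1, xy.2, hlt, Finset.mem_range.mp (Finset.mem_product.mp hprod).2, rfl⟩
  have hQmatch : IsIntMatching Q := by
    constructor
    · intro p hp
      obtain ⟨x, y, hxy, hyN, rfl⟩ := hQmem p hp
      have := encN_lt (N := N) hxy (by omega)
      dsimp only
      exact_mod_cast this
    · intro p hp q hq hpq
      obtain ⟨x, y, hxy, hyN, rfl⟩ := hQmem p hp
      obtain ⟨u, v, huv, hvN, rfl⟩ := hQmem q hq
      have hxN : x < N + 1 := by omega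
      have hyN' : y < N + 1 := by omega
      have huN : u < N + 1 := by omega
      have hvN' : v < N + 1 := by omega
      have hne : ¬(x = u ∧ y = v) := by
        intro ⟨h1, h2⟩; subst h1; subst h2; exact hpq rfl
      refine ⟨?_, ?_, ?_, ?_⟩
      · intro h
        have h' : encN N x y = encN N u v := by dsimp only at h; exact_mod_cast h
        exact hne (encN_inj hyN' hvN' h')
      · intro h
        have h' : encN N x y = encN N v u := by dsimp only at h; exact_mod_cast h
        obtain ⟨h1, h2⟩ := encN_inj hyN' huN h'
        omega
      · intro h
        have h' : encN N y x = encN N u v := by dsimp only at h; exact_mod_cast h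
        obtain ⟨h1, h2⟩ := encN_inj hxN hvN' h'
        omega
      · intro h
        have h' : encN N y x = encN N v u := by dsimp only at h; exact_mod_cast h
        obtain ⟨h1, h2⟩ := encN_inj hxN huN h'
        exact hne ⟨h2, h1⟩
  refine ⟨Q, hQmatch, ?_⟩
  intro Q1 Q2 hunion
  set col : ℕ → ℕ → Bool :=
    fun x y => decide (((encN N x y : ℤ), (encN N y x : ℤ)) ∈ Q1) with hcol
  obtain ⟨H, hHsub, hH⟩ := hN (Finset.range N) col (by rw [Finset.card_range])
  rcases hH with ⟨hcard, hmono⟩ | ⟨hcard, hmono⟩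
  · obtain ⟨P', hcopy, hedges⟩ := exists_copy P hP N H hHsub hcard
    refine ⟨P', hcopy, Or.inl ?_⟩
    intro p hp
    obtain ⟨x, hxH, y, hyH, hxy, rfl⟩ := hedges p hp
    have := hmono x hxH y hyH hxy
    rw [hcol] at this
    exact of_decide_eq_true this
  · obtain ⟨P', hcopy, hedges⟩ := exists_copy P hP N H hHsub hcard
    refine ⟨P', hcopy, Or.inr ?_⟩
    intro p hp
    obtain ⟨x, hxH, y, hyH, hxy, rfl⟩ := hedges p hp
    have hnot : ((encN N x y : ℤ), (encN N y x : ℤ)) ∉ Q1 := by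
      have := hmono x hxH y hyH hxy
      rw [hcol] at this
      exact of_decide_eq_false this
    have hinQ : ((encN N x y : ℤ), (encN N y x : ℤ)) ∈ Q :=
      hmemQ x y hxy (Finset.mem_range.mp (hHsub hyH))
    rw [← hunion] at hinQ
    rcases Finset.mem_union.mp hinQ with h | h
    · exact absurd h hnot
    · exact h
end
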